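/- arXiv:2306.17133 — 9 statements merged into one kernel-verified Lean document; each statement's English description precedes it below -/
import Mathlib

section
/- Every normalizing Haar unitary is B-valued R-diagonal. Precisely: if u is a unitary in a B-valued *-noncommutative probability space (A,E) such that E(u^k)=0 for all nonzero integers k, and u normalizes B (i.e., ubu* and u*bu lie in B for all b in B), then u satisfies the moment condition defining B-valued R-diagonal elements: all odd alternating moments E(u b_1 u* b_2 u ... u) vanish, and for all n≥1, ε∈{1,*}^n, b_1,...,b_n ∈ B, the expectation of the product over blocks V of the maximal alternating interval partition σ(ε) of the centered block products vanishes. -/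
/-!
Write `u^ε` for `u` or `u*`. Since `u` is unitary and normalizes `B`, `u^ε b = b' u^ε` with
`b' ∈ B`, so an alternating word `u^{ε₁} b₁ ⋯ u^{εₙ} bₙ` equals `c ∈ B` when `n` is even and
`c u^{ε₁}` when `n` is odd. Hence a centered even block is `0`, while a centered odd block is the
block itself (as `E (c u^ε) = c E(u^ε) = 0`). If all blocks are odd, maximality forces them all
to start with the same `u^ε`, so the product of the centered blocks is `c (u^ε)^m` with `m ≥ 1`,
whose expectation vanishes by the Haar property.
-/

theorem List.IsChain.getLast?_eq_head?_of_odd {l : List Bool} (hl : l.IsChain (· ≠ ·))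
    (hodd : Odd l.length) : l.getLast? = l.head? := by
  induction l using List.twoStepInduction with
  | nil => simp at hodd
  | singleton => rfl
  | cons_cons a b l ih _ =>
    rcases l with _ | ⟨c, l⟩
    · norm_num at hodd
    · obtain ⟨hab, hbc, hl⟩ : a ≠ b ∧ b ≠ c ∧ (c :: l).IsChain (· ≠ ·) := by simpa using hl
      rw [List.getLast?_cons_cons, List.getLast?_cons_cons,
        ih hl (by simpa [Nat.odd_add_one, parity_simps] using hodd)]
      cases a <;> cases b <;> cases c <;> simp_all

theorem List.IsChain.eq_of_mem_of_mem {β γ : Type*} {f g : β → γ} {l : List β}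
    (hl : l.IsChain fun a b => g a = f b) (hgf : ∀ a ∈ l, g a = f a) {a b : β}
    (ha : a ∈ l) (hb : b ∈ l) : f a = f b := by
  have hf : (l.map f).IsChain (· = ·) :=
    List.isChain_map_of_isChain f (fun _ _ h => h) <|
      hl.imp_of_mem_imp fun a _ ha _ h => (hgf a ha).symm.trans h
  rcases l with _ | ⟨c, l⟩
  · simp at ha
  · rw [List.map_cons, List.isChain_cons_eq_iff_eq_replicate] at hf
    have hconst : ∀ x ∈ c :: l, f x = f c := by
      rintro x (_ | ⟨_, hx⟩)
      · rfl
      · exact List.eq_of_mem_replicate (hf ▸ List.mem_map_of_mem hx)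
    rw [hconst a ha, hconst b hb]

theorem head?_map_fst_eq_of_isChain {α : Type*} {blocks : List (List (Bool × α))}
    (halt : ∀ V ∈ blocks, V.IsChain fun p q => p.1 ≠ q.1) (hodd : ∀ V ∈ blocks, Odd V.length)
    (hmax : blocks.IsChain fun V W => V.getLast?.map Prod.fst = W.head?.map Prod.fst)
    {V W : List (Bool × α)} (hV : V ∈ blocks) (hW : W ∈ blocks) :
    V.head?.map Prod.fst = W.head?.map Prod.fst := by
  refine hmax.eq_of_mem_of_mem (fun X hX => ?_) hV hW
  have hsigns : (X.map Prod.fst).IsChain (· ≠ ·) := (List.isChain_map Prod.fst).2 (halt X hX)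
  simpa [List.getLast?_map, List.head?_map] using
    hsigns.getLast?_eq_head?_of_odd (by simpa using hodd X hX)

section Normalizes

variable {A S : Type*} [Monoid A] [StarMul A] [SetLike S A] {B : S} {u v : A}

def Normalizes (B : S) (u : A) : Prop :=
  ∀ b ∈ B, u * b * star u ∈ B ∧ star u * b * u ∈ B

theorem normalizes_star (h : Normalizes B u) : Normalizes B (star u) := by
  simpa only [Normalizes, star_star, and_comm] using h

theorem Normalizes.exists_mul_eq_mul (h : Normalizes B v) (hv : v ∈ unitary A) {b : A}
    (hb : b ∈ B) : ∃ c ∈ B, v * b = c * v :=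
  ⟨v * b * star v, (h b hb).1, by
    rw [mul_assoc _ (star v), Unitary.star_mul_self_of_mem hv, mul_one]⟩

def epsPow (u : A) (s : Bool) : A := if s then u else star u

@[simp] theorem epsPow_true (u : A) : epsPow u true = u := rfl

@[simp] theorem epsPow_false (u : A) : epsPow u false = star u := rfl

theorem epsPow_mul_epsPow_not (hu : u ∈ unitary A) (s : Bool) :
    epsPow u s * epsPow u (!s) = 1 := by
  cases s <;> simp [hu]

theorem epsPow_mem_unitary (hu : u ∈ unitary A) (s : Bool) : epsPow u s ∈ unitary A := by
  cases s <;> simp [hu]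

theorem normalizes_epsPow (h : Normalizes B u) (s : Bool) : Normalizes B (epsPow u s) := by
  cases s
  exacts [normalizes_star h, h]

variable [SubmonoidClass S A]

theorem Normalizes.exists_prod_eq_mul_pow (h : Normalizes B v) (hv : v ∈ unitary A)
    (L : List A) (hL : ∀ x ∈ L, ∃ c ∈ B, x = c * v) : ∃ c ∈ B, L.prod = c * v ^ L.length := by
  induction L with
  | nil => exact ⟨1, one_mem B, by simp⟩
  | cons x L ih =>
    obtain ⟨c, hc, rfl⟩ := hL x List.mem_cons_self
    obtain ⟨d, hd, hprod⟩ := ih fun y hy => hL y (List.mem_cons_of_mem _ hy)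
    obtain ⟨e, he, hvd⟩ := h.exists_mul_eq_mul hv hd
    refine ⟨c * e, mul_mem hc he, ?_⟩
    rw [List.prod_cons, hprod, List.length_cons, pow_succ', mul_assoc c, ← mul_assoc v, hvd]
    simp only [mul_assoc]

def wordProd (u : A) (V : List (Bool × A)) : A := (V.map fun p => epsPow u p.1 * p.2).prod

theorem Normalizes.exists_wordProd_eq (h : Normalizes B u) (hu : u ∈ unitary A)
    (V : List (Bool × A)) (halt : V.IsChain fun p q => p.1 ≠ q.1) (hB : ∀ p ∈ V, p.2 ∈ B)
    (s : Bool) (hs : ∀ p ∈ V.head?, p.1 = s) :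
    ∃ c ∈ B, wordProd u V = c * epsPow u s ^ (V.length % 2) := by
  induction V generalizing s with
  | nil => exact ⟨1, one_mem B, by simp [wordProd]⟩
  | cons p V ih =>
    obtain rfl : p.1 = s := hs p rfl
    obtain ⟨hhead, halt⟩ := List.isChain_cons.1 halt
    obtain ⟨c, hc, hV⟩ := ih halt (fun q hq => hB q (List.mem_cons_of_mem p hq)) (!p.1)
      fun q hq => Bool.eq_not.2 (hhead q hq).symm
    obtain ⟨d, hd, hpc⟩ := (normalizes_epsPow h p.1).exists_mul_eq_mul (epsPow_mem_unitary hu p.1)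
      (mul_mem (hB p List.mem_cons_self) hc)
    have hprod : wordProd u (p :: V) = d * epsPow u p.1 * epsPow u (!p.1) ^ (V.length % 2) := by
      rw [← hpc, wordProd, List.map_cons, List.prod_cons, ← wordProd, hV]
      simp only [mul_assoc]
    refine ⟨d, hd, ?_⟩
    rw [hprod, List.length_cons]
    rcases Nat.mod_two_eq_zero_or_one V.length with h0 | h1
    · rw [h0, Nat.add_mod, h0]
      simp
    · rw [h1, Nat.add_mod, h1, pow_one, mul_assoc, epsPow_mul_epsPow_not hu]
      simp

end Normalizes

section Expectation

variable {A S : Type*} [Ring A] [StarRing A] [SetLike S A] [SubmonoidClass S A] {B : S}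
  {u : A} {E : A → A}

theorem sub_apply_wordProd_eq_zero_of_even (hEid : ∀ b ∈ B, E b = b) (h : Normalizes B u)
    (hu : u ∈ unitary A) {V : List (Bool × A)} (halt : V.IsChain fun p q => p.1 ≠ q.1)
    (hB : ∀ p ∈ V, p.2 ∈ B) (heven : Even V.length) :
    wordProd u V - E (wordProd u V) = 0 := by
  have hV : wordProd u V ∈ B := by
    rcases V with _ | ⟨p, V⟩
    · exact one_mem B
    · obtain ⟨c, hc, hV⟩ := h.exists_wordProd_eq hu (p :: V) halt hB p.1 (by simp)
      rw [Nat.even_iff.1 heven, pow_zero, mul_one] at hV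
      exact hV ▸ hc
  rw [hEid _ hV, sub_self]

theorem exists_sub_apply_wordProd_eq_of_odd (hEmul : ∀ c ∈ B, ∀ x, E (c * x) = c * E x)
    (h : Normalizes B u) (hu : u ∈ unitary A) {s : Bool} (hE : E (epsPow u s) = 0)
    {V : List (Bool × A)} (halt : V.IsChain fun p q => p.1 ≠ q.1) (hB : ∀ p ∈ V, p.2 ∈ B)
    (hodd : Odd V.length) (hs : V.head?.map Prod.fst = some s) :
    ∃ c ∈ B, wordProd u V - E (wordProd u V) = c * epsPow u s := by
  obtain ⟨c, hc, hV⟩ := h.exists_wordProd_eq hu V halt hB s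
    fun p hp => by simpa [Option.mem_def.1 hp] using hs
  rw [Nat.odd_iff.1 hodd, pow_one] at hV
  exact ⟨c, hc, by rw [hV, hEmul c hc, hE, mul_zero, sub_zero]⟩

end Expectation

theorem normalizing_haar_unitary_is_rdiagonal_general
    {A : Type*} [Ring A] [StarRing A] [Algebra ℂ A] [StarModule ℂ A]
    (B : StarSubalgebra ℂ A) (E : A →ₗ[ℂ] A)
    (hEid : ∀ b ∈ B, E b = b)
    (hEbimod : ∀ a : A, ∀ b₁ ∈ B, ∀ b₂ ∈ B, E (b₁ * a * b₂) = b₁ * E a * b₂)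
    (u : A) (huu : u * star u = 1) (hsuu : star u * u = 1)
    (hHaar : ∀ k : ℕ, k ≠ 0 → E (u ^ k) = 0 ∧ E (star u ^ k) = 0)
    (hnorm : ∀ b ∈ B, u * b * star u ∈ B ∧ star u * b * u ∈ B) :
    -- odd alternating moments vanish:
    (∀ (k : ℕ) (b₁ b₂ : Fin k → A), (∀ i, b₁ i ∈ B) → (∀ i, b₂ i ∈ B) →
      E (u * (List.ofFn fun i => b₁ i * star u * b₂ i * u).prod) = 0) ∧
    -- centered block products over the maximal alternating interval partition vanish:
    (∀ blocks : List (List (Bool × A)), blocks ≠ [] →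
      (∀ V ∈ blocks, V ≠ []) →
      (∀ V ∈ blocks, ∀ p ∈ V, p.2 ∈ B) →
      -- each block is alternating:
      (∀ V ∈ blocks, V.Chain' fun p q => p.1 ≠ q.1) →
      -- maximality: adjacent blocks meet with equal signs:
      blocks.Chain' (fun V W => V.getLast?.map Prod.fst = W.head?.map Prod.fst) →
      E ((blocks.map fun V =>
            ((V.map fun p => (if p.1 then u else star u) * p.2).prod)
              - E ((V.map fun p => (if p.1 then u else star u) * p.2).prod)).prod) = 0) := by
  have hu : u ∈ unitary A := ⟨hsuu, huu⟩
  have hN : Normalizes B u := hnorm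
  have hEmul (c : A) (hc : c ∈ B) (x : A) : E (c * x) = c * E x := by
    simpa using hEbimod x c hc 1 (one_mem B)
  have hEpow (s : Bool) (k : ℕ) (hk : k ≠ 0) : E (epsPow u s ^ k) = 0 := by
    cases s
    exacts [(hHaar k hk).2, (hHaar k hk).1]
  have hEeps (s : Bool) : E (epsPow u s) = 0 := by simpa using hEpow s 1 one_ne_zero
  refine ⟨fun k b₁ b₂ h₁ h₂ => ?_, fun blocks hne hVne hB halt hmax => ?_⟩
  · have hprod : (List.ofFn fun i => b₁ i * star u * b₂ i * u).prod ∈ B :=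
      list_prod_mem <| by
        simpa [List.mem_ofFn, mul_assoc] using fun i => mul_mem (h₁ i) (hnorm _ (h₂ i)).2
    simpa [show E u = 0 from hEeps true] using hEbimod u 1 (one_mem B) _ hprod
  change E (blocks.map fun V => wordProd u V - E (wordProd u V)).prod = 0
  by_cases hodd : ∀ V ∈ blocks, Odd V.length
  · obtain ⟨V₀, hV₀⟩ := List.exists_mem_of_ne_nil blocks hne
    obtain ⟨p₀, V₀', rfl⟩ := List.exists_cons_of_ne_nil (hVne _ hV₀)
    obtain ⟨c, hc, hprod⟩ := (normalizes_epsPow hN p₀.1).exists_prod_eq_mul_pow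
      (epsPow_mem_unitary hu p₀.1) _ <| List.forall_mem_map.2 fun V hV =>
        exists_sub_apply_wordProd_eq_of_odd hEmul hN hu (hEeps p₀.1) (halt V hV) (hB V hV)
          (hodd V hV) (head?_map_fst_eq_of_isChain halt hodd hmax hV hV₀)
    rw [hprod, hEmul c hc, hEpow _ _ (by simpa using hne), mul_zero]
  · obtain ⟨V, hV, heven⟩ := not_forall₂.1 hodd
    rw [List.prod_eq_zero (List.mem_map.2 ⟨V, hV, sub_apply_wordProd_eq_zero_of_even hEid hN hu
      (halt V hV) (hB V hV) (Nat.not_odd_iff_even.1 heven)⟩), map_zero]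

/-- Every normalizing Haar unitary is B-valued R-diagonal (moment condition):
odd alternating moments vanish, and the centered products over the blocks of any
maximal alternating interval partition have vanishing expectation. -/
theorem normalizing_haar_unitary_is_rdiagonal
    {A : Type*} [Ring A] [StarRing A] [Algebra ℂ A] [StarModule ℂ A]
    (B : StarSubalgebra ℂ A) (E : A →ₗ[ℂ] A)
    (hErange : ∀ a : A, E a ∈ B)
    (hEid : ∀ b ∈ B, E b = b)
    (hEstar : ∀ a : A, E (star a) = star (E a))
    (hEbimod : ∀ a : A, ∀ b₁ ∈ B, ∀ b₂ ∈ B, E (b₁ * a * b₂) = b₁ * E a * b₂)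
    (u : A) (huu : u * star u = 1) (hsuu : star u * u = 1)
    (hHaar : ∀ k : ℕ, k ≠ 0 → E (u ^ k) = 0 ∧ E (star u ^ k) = 0)
    (hnorm : ∀ b ∈ B, u * b * star u ∈ B ∧ star u * b * u ∈ B) :
    -- odd alternating moments vanish:
    (∀ (k : ℕ) (b₁ b₂ : Fin k → A), (∀ i, b₁ i ∈ B) → (∀ i, b₂ i ∈ B) →
      E (u * (List.ofFn fun i => b₁ i * star u * b₂ i * u).prod) = 0) ∧
    -- centered block products over the maximal alternating interval partition vanish:
    (∀ blocks : List (List (Bool × A)), blocks ≠ [] →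
      (∀ V ∈ blocks, V ≠ []) →
      (∀ V ∈ blocks, ∀ p ∈ V, p.2 ∈ B) →
      -- each block is alternating:
      (∀ V ∈ blocks, V.Chain' fun p q => p.1 ≠ q.1) →
      -- maximality: adjacent blocks meet with equal signs:
      blocks.Chain' (fun V W => V.getLast?.map Prod.fst = W.head?.map Prod.fst) →
      E ((blocks.map fun V =>
            ((V.map fun p => (if p.1 then u else star u) * p.2).prod)
              - E ((V.map fun p => (if p.1 then u else star u) * p.2).prod)).prod) = 0) :=
  normalizing_haar_unitary_is_rdiagonal_general B E hEid hEbimod u huu hsuu hHaar hnorm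
end

section
/- In M_2(C(T)) with the conditional expectation E onto the diagonal constant matrices C^2 given by entrywise Haar-measure integration of the diagonal entries, the unitary u = p⊗v + (1-p)⊗v*, where v(z)=z is the identity function on the circle and p = (1/2)[[1,1],[1,1]], is a Haar unitary (E(u^k)=0 for all k≠0) but is unbalanced: E(u e_{11} u) = (1/2) diag(1,-1) ≠ 0. -/
open scoped BigOperators

/-- Powers of the symmetric `2×2` matrix `[[h(v+w), h(v-w)],[h(v-w), h(v+w)]]`
when `h + h = 1`. -/
lemma unbalanced_haar_pow_formula {R : Type*} [CommRing R] (h v w : R)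
    (hh : h + h = 1) (k : ℕ) :
    (Matrix.of ![![h*(v+w), h*(v-w)], ![h*(v-w), h*(v+w)]] : Matrix (Fin 2) (Fin 2) R) ^ k
      = Matrix.of ![![h*(v^k+w^k), h*(v^k-w^k)], ![h*(v^k-w^k), h*(v^k+w^k)]] := by
  induction k with
  | zero =>
    ext i j
    fin_cases i <;> fin_cases j <;>
      simp [Matrix.one_apply] <;>
      first
        | ring1
        | linear_combination (2:R)*hh
        | linear_combination (-2:R)*hh
        | linear_combination hh
        | linear_combination -hh
  | succ k ih =>
    rw [pow_succ, ih]
    ext i j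
    fin_cases i <;> fin_cases j <;>
      simp [Matrix.mul_apply, Fin.sum_univ_two] <;>
      first
        | ring1
        | linear_combination (h*(v^(k+1)+w^(k+1)))*hh
        | linear_combination (-(h*(v^(k+1)+w^(k+1))))*hh
        | linear_combination (h*(v^(k+1)-w^(k+1)))*hh
        | linear_combination (-(h*(v^(k+1)-w^(k+1))))*hh

/-- Unbalanced Haar unitary: in `M₂(C(𝕋))` (here `R` is any commutative star
ℂ-algebra with a trace `τ` and a Haar unitary `v`, such as `C(𝕋)` with Haar
integration and `v(z)=z`), the unitary `u = p ⊗ v + (1-p) ⊗ v*`, with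
`p = (1/2)[[1,1],[1,1]]`, is a Haar unitary for the conditional expectation
`E` onto the diagonal constants, but `E(u e₁₁ u) = (1/2) diag(1,-1) ≠ 0`,
so `u` is unbalanced. -/
theorem unbalanced_haar_unitary_example
    {R : Type*} [CommRing R] [StarRing R] [Algebra ℂ R] [StarModule ℂ R] [Nontrivial R]
    (τ : R →ₗ[ℂ] ℂ) (hτ1 : τ 1 = 1)
    (hτstar : ∀ f : R, τ (star f) = star (τ f))
    (v : R) (hv : v * star v = 1)
    (hHaar : ∀ k : ℕ, k ≠ 0 → τ (v ^ k) = 0 ∧ τ (star v ^ k) = 0) :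
    let h : R := algebraMap ℂ R (1 / 2)
    let p : Matrix (Fin 2) (Fin 2) R := Matrix.of ![![h, h], ![h, h]]
    let u : Matrix (Fin 2) (Fin 2) R := v • p + star v • (1 - p)
    let E : Matrix (Fin 2) (Fin 2) R → Matrix (Fin 2) (Fin 2) R := fun M =>
      Matrix.diagonal ![algebraMap ℂ R (τ (M 0 0)), algebraMap ℂ R (τ (M 1 1))]
    -- u is a unitary
    (u * star u = 1 ∧ star u * u = 1) ∧
    -- u is a Haar unitary
    (∀ k : ℕ, k ≠ 0 → E (u ^ k) = 0 ∧ E (star u ^ k) = 0) ∧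
    -- u is unbalanced
    E (u * Matrix.diagonal ![1, 0] * u)
      = algebraMap ℂ R (1 / 2) • Matrix.diagonal ![1, -1] ∧
    algebraMap ℂ R (1 / 2) • (Matrix.diagonal ![(1 : R), -1]) ≠ 0 := by
  intro h p u E
  have hh : h + h = 1 := by
    show algebraMap ℂ R (1/2) + algebraMap ℂ R (1/2) = 1
    rw [← map_add, show (1/2 : ℂ) + 1/2 = 1 by norm_num, map_one]
  have hsh : star h = h := by
    show star (algebraMap ℂ R (1/2)) = algebraMap ℂ R (1/2)
    rw [← algebraMap_star_comm]
    norm_num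
  have key : ∀ x : R, τ (h * x) = (1/2) * τ x := by
    intro x
    show τ (algebraMap ℂ R (1/2) * x) = _
    rw [← Algebra.smul_def, map_smul, smul_eq_mul]
  -- entrywise formula for u
  have hu : u = Matrix.of ![![h*(v+star v), h*(v-star v)],
      ![h*(v-star v), h*(v+star v)]] := by
    ext i j
    fin_cases i <;> fin_cases j <;>
      simp [u, p, Matrix.add_apply, Matrix.sub_apply, Matrix.smul_apply,
        Matrix.one_apply, smul_eq_mul] <;>
      first
        | ring1
        | linear_combination (star v) * hh
        | linear_combination (-(star v)) * hh
  have hsu : star u = Matrix.of ![![h*(star v+v), h*(star v-v)],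
      ![h*(star v-v), h*(star v+v)]] := by
    rw [hu]
    ext i j
    fin_cases i <;> fin_cases j <;>
      simp [Matrix.star_apply, star_mul', star_add, star_sub, hsh, star_star] <;>
      ring
  refine ⟨⟨?_, ?_⟩, ?_, ?_, ?_⟩
  · -- u * star u = 1
    rw [hsu, hu]
    ext i j
    fin_cases i <;> fin_cases j <;>
      simp [Matrix.mul_apply, Fin.sum_univ_two, Matrix.one_apply] <;>
      first
        | ring1
        | linear_combination 4*h*h*hv + (h+h+1)*hh
        | linear_combination (-(4*h*h))*hv + (-(h+h+1))*hh
  · -- star u * u = 1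
    rw [hsu, hu]
    ext i j
    fin_cases i <;> fin_cases j <;>
      simp [Matrix.mul_apply, Fin.sum_univ_two, Matrix.one_apply] <;>
      first
        | ring1
        | linear_combination 4*h*h*hv + (h+h+1)*hh
        | linear_combination (-(4*h*h))*hv + (-(h+h+1))*hh
  · -- Haar unitary
    intro k hk
    have hτv : τ (v ^ k) = 0 := (hHaar k hk).1
    have hτw : τ (star v ^ k) = 0 := (hHaar k hk).2
    have h1 : τ (h * (v ^ k + star v ^ k)) = 0 := by
      rw [key, map_add, hτv, hτw]; ring
    have h2 : τ (h * (star v ^ k + v ^ k)) = 0 := by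
      rw [key, map_add, hτv, hτw]; ring
    constructor
    · show Matrix.diagonal ![algebraMap ℂ R (τ ((u^k) 0 0)),
        algebraMap ℂ R (τ ((u^k) 1 1))] = 0
      rw [hu, unbalanced_haar_pow_formula h v (star v) hh k]
      ext i j
      fin_cases i <;> fin_cases j <;>
        simp [Matrix.diagonal_apply, h1]
    · show Matrix.diagonal ![algebraMap ℂ R (τ ((star u^k) 0 0)),
        algebraMap ℂ R (τ ((star u^k) 1 1))] = 0
      rw [hsu, unbalanced_haar_pow_formula h (star v) v hh k]
      ext i j
      fin_cases i <;> fin_cases j <;>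
        simp [Matrix.diagonal_apply, h2]
  · -- unbalanced equality
    have hM00 : (u * Matrix.diagonal ![1, 0] * u : Matrix (Fin 2) (Fin 2) R) 0 0
        = h*(v+star v) * (h*(v+star v)) := by
      rw [hu]
      simp [Matrix.mul_apply, Matrix.vecMul, dotProduct, Fin.sum_univ_two, Matrix.diagonal_apply]
    have hM11 : (u * Matrix.diagonal ![1, 0] * u : Matrix (Fin 2) (Fin 2) R) 1 1
        = h*(v-star v) * (h*(v-star v)) := by
      rw [hu]
      simp [Matrix.mul_apply, Matrix.vecMul, dotProduct, Fin.sum_univ_two, Matrix.diagonal_apply]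
    have e00 : h*(v+star v) * (h*(v+star v))
        = h * (h * (v^2 + star v^2 + (1+1))) := by
      linear_combination (2*h*h)*hv
    have e11 : h*(v-star v) * (h*(v-star v))
        = h * (h * (v^2 + star v^2 - (1+1))) := by
      linear_combination (-(2*h*h))*hv
    have t00 : τ ((u * Matrix.diagonal ![1, 0] * u : Matrix (Fin 2) (Fin 2) R) 0 0)
        = 1/2 := by
      rw [hM00, e00, key, key, map_add, map_add, (hHaar 2 two_ne_zero).1,
        (hHaar 2 two_ne_zero).2, map_add, hτ1]
      norm_num
    have t11 : τ ((u * Matrix.diagonal ![1, 0] * u : Matrix (Fin 2) (Fin 2) R) 1 1)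
        = -(1/2) := by
      rw [hM11, e11, key, key, map_sub, map_add, (hHaar 2 two_ne_zero).1,
        (hHaar 2 two_ne_zero).2, map_add, hτ1]
      norm_num
    show Matrix.diagonal
        ![algebraMap ℂ R (τ ((u * Matrix.diagonal ![1, 0] * u : Matrix (Fin 2) (Fin 2) R) 0 0)),
          algebraMap ℂ R (τ ((u * Matrix.diagonal ![1, 0] * u : Matrix (Fin 2) (Fin 2) R) 1 1))]
      = algebraMap ℂ R (1 / 2) • Matrix.diagonal ![1, -1]
    rw [t00, t11, ← Matrix.diagonal_smul]
    exact congrArg Matrix.diagonal (by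
      funext i
      fin_cases i <;> simp [Algebra.smul_def, smul_eq_mul, map_neg])
  · -- nonzero
    intro hcon
    have h00 := congrFun (congrFun hcon 0) 0
    rw [Matrix.smul_apply, Matrix.zero_apply, Matrix.diagonal_apply_eq,
      smul_eq_mul, show (![(1:R), -1]) 0 = 1 from rfl, mul_one] at h00
    have hz : (1 : R) = 0 := by
      calc (1:R) = algebraMap ℂ R (1/2) * algebraMap ℂ R 2 := by
            rw [← map_mul]; norm_num
        _ = 0 := by rw [h00, zero_mul]
    exact one_ne_zero hz
end

section
/- Let A = M_2(C*(Z×Z)) with B=C^2 the diagonal matrices supported on the group identity, E the conditional expectation taking (g_{ij}) to diag(τ(g_{11}), τ(g_{22})) for the canonical trace τ. With v=1·(1,0), w=1·(0,1) the canonical commuting Haar unitaries and p=(1/2)[[1,1],[1,1]], the unitary u = p⊗v + (1-p)⊗w is balanced (all unbalanced *-moments vanish), but u is not B-valued R-diagonal: with b_1=b_2=b_3=e_{11}, E((u*b_1u − E(u*b_1u)) b_2 (u b_3 u* − E(u b_3 u*))) = (1/8) diag(1,−1) ≠ 0. -/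
open scoped BigOperators

set_option maxHeartbeats 1600000

section AuxRDiag
variable {R : Type*} [CommRing R] [StarRing R] [Algebra ℂ R]

private def grSpan (v w : R) (d : ℤ) : Submodule ℂ R :=
  Submodule.span ℂ {x | ∃ n m k l : ℕ, (n:ℤ) + m - k - l = d ∧ x = v^n * w^m * star v^k * star w^l}

private lemma mem_grSpan (v w : R) {n m k l : ℕ} {d : ℤ} (hd : (n:ℤ)+m-k-l = d) :
    v^n * w^m * star v^k * star w^l ∈ grSpan v w d :=
  Submodule.subset_span ⟨n,m,k,l,hd,rfl⟩

private lemma grSpan_mul {v w : R} {d e : ℤ} {x y : R}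
    (hx : x ∈ grSpan v w d) (hy : y ∈ grSpan v w e) :
    x * y ∈ grSpan v w (d+e) := by
  have h := Submodule.mul_mem_mul hx hy
  rw [grSpan, grSpan, Submodule.span_mul_span] at h
  refine Submodule.span_le.mpr ?_ h
  rintro _ ⟨a, ⟨n,m,k,l,hd,rfl⟩, b, ⟨n',m',k',l',he,rfl⟩, rfl⟩
  exact Submodule.subset_span ⟨n+n', m+m', k+k', l+l', by push_cast; omega,
    by rw [pow_add, pow_add, pow_add, pow_add]; ring⟩

private lemma grSpan_tau (τ : R →ₗ[ℂ] ℂ) (v w : R)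
    (hHaar : ∀ n m k l : ℕ, (n ≠ k ∨ m ≠ l) →
      τ (v ^ n * w ^ m * star v ^ k * star w ^ l) = 0)
    {d : ℤ} (hd : d ≠ 0) {x : R} (hx : x ∈ grSpan v w d) : τ x = 0 := by
  have hle : grSpan v w d ≤ LinearMap.ker τ := by
    apply Submodule.span_le.mpr
    rintro _ ⟨n,m,k,l,hdd,rfl⟩
    simpa [LinearMap.mem_ker] using hHaar n m k l (by omega)
  exact hle hx

private lemma one_mem_grSpan (v w : R) : (1:R) ∈ grSpan v w 0 := by
  simpa using mem_grSpan v w (n:=0) (m:=0) (k:=0) (l:=0) (d:=0) (by norm_num)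

private lemma v_mem_grSpan (v w : R) : v ∈ grSpan v w 1 := by
  simpa using mem_grSpan v w (n:=1) (m:=0) (k:=0) (l:=0) (d:=1) (by norm_num)

private lemma w_mem_grSpan (v w : R) : w ∈ grSpan v w 1 := by
  simpa using mem_grSpan v w (n:=0) (m:=1) (k:=0) (l:=0) (d:=1) (by norm_num)

private lemma sv_mem_grSpan (v w : R) : star v ∈ grSpan v w (-1) := by
  simpa using mem_grSpan v w (n:=0) (m:=0) (k:=1) (l:=0) (d:=-1) (by norm_num)

private lemma sw_mem_grSpan (v w : R) : star w ∈ grSpan v w (-1) := by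
  simpa using mem_grSpan v w (n:=0) (m:=0) (k:=0) (l:=1) (d:=-1) (by norm_num)

private def PM (v w : R) (d : ℤ) (M : Matrix (Fin 2) (Fin 2) R) : Prop :=
  ∀ i j, M i j ∈ grSpan v w d

private lemma pm_mul {v w : R} {d e : ℤ} {M N : Matrix (Fin 2) (Fin 2) R}
    (hM : PM v w d M) (hN : PM v w e N) : PM v w (d+e) (M*N) := fun i j => by
  rw [Matrix.mul_apply]
  exact Submodule.sum_mem _ fun k _ => grSpan_mul (hM i k) (hN k j)

private lemma pm_one (v w : R) : PM v w 0 1 := fun i j => by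
  rw [Matrix.one_apply]
  split
  · exact one_mem_grSpan v w
  · exact zero_mem _

private lemma pm_listProd (v w : R) :
    ∀ (k : ℕ) (f : Fin k → Matrix (Fin 2) (Fin 2) R) (g : Fin k → ℤ),
    (∀ i, PM v w (g i) (f i)) → PM v w (∑ i, g i) (List.ofFn f).prod := by
  intro k
  induction k with
  | zero => intro f g _; simpa using pm_one v w
  | succ n ih =>
    intro f g hf
    rw [List.ofFn_succ, List.prod_cons, Fin.sum_univ_succ]
    exact pm_mul (hf 0) (ih _ _ fun i => hf i.succ)

end AuxRDiag

/-- Balanced unitary that is not R-diagonal: in `M₂(C*(ℤ×ℤ))` (here `R` is any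
commutative star ℂ-algebra with a trace `τ` and two jointly Haar unitaries
`v, w`, such as `C*(ℤ×ℤ)` with its canonical trace and generators), the unitary
`u = p ⊗ v + (1-p) ⊗ w`, with `p = (1/2)[[1,1],[1,1]]`, is balanced for the
conditional expectation `E` onto `B = ℂ²` (diagonal constants), but
`E((u*e₁₁u − E(u*e₁₁u)) e₁₁ (u e₁₁ u* − E(u e₁₁ u*))) = (1/8) diag(1,−1) ≠ 0`,
so `u` is not B-valued R-diagonal. -/
theorem balanced_not_rdiagonal_example
    {R : Type*} [CommRing R] [StarRing R] [Algebra ℂ R] [StarModule ℂ R] [Nontrivial R]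
    (τ : R →ₗ[ℂ] ℂ) (hτ1 : τ 1 = 1)
    (hτstar : ∀ f : R, τ (star f) = star (τ f))
    (v w : R) (hv : v * star v = 1) (hw : w * star w = 1)
    -- joint Haar property: τ(vⁿ wᵐ v*ᵏ w*ˡ) = 0 unless n = k and m = l
    (hHaar : ∀ n m k l : ℕ, (n ≠ k ∨ m ≠ l) →
      τ (v ^ n * w ^ m * star v ^ k * star w ^ l) = 0) :
    let h : R := algebraMap ℂ R (1 / 2)
    let p : Matrix (Fin 2) (Fin 2) R := Matrix.of ![![h, h], ![h, h]]
    let u : Matrix (Fin 2) (Fin 2) R := v • p + w • (1 - p)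
    let E : Matrix (Fin 2) (Fin 2) R → Matrix (Fin 2) (Fin 2) R := fun M =>
      Matrix.diagonal ![algebraMap ℂ R (τ (M 0 0)), algebraMap ℂ R (τ (M 1 1))]
    let Bset : Set (Matrix (Fin 2) (Fin 2) R) :=
      {M | ∃ z₁ z₂ : ℂ, M = Matrix.diagonal ![algebraMap ℂ R z₁, algebraMap ℂ R z₂]}
    let e₁₁ : Matrix (Fin 2) (Fin 2) R := Matrix.diagonal ![1, 0]
    -- u is a unitary
    (u * star u = 1 ∧ star u * u = 1) ∧
    -- u is balanced: every unbalanced *-moment vanishes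
    (∀ (m : ℕ) (ε : Fin (m + 1) → Bool) (b : Fin m → Matrix (Fin 2) (Fin 2) R),
      (∀ i, b i ∈ Bset) →
      2 * (Finset.univ.filter fun i => ε i = true).card ≠ m + 1 →
      E ((if ε 0 then u else star u) *
          (List.ofFn fun i : Fin m => b i * (if ε i.succ then u else star u)).prod) = 0) ∧
    -- u is not B-valued R-diagonal:
    E ((star u * e₁₁ * u - E (star u * e₁₁ * u)) * e₁₁ *
        (u * e₁₁ * star u - E (u * e₁₁ * star u)))
      = algebraMap ℂ R (1 / 8) • Matrix.diagonal ![1, -1] ∧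
    algebraMap ℂ R (1 / 8) • (Matrix.diagonal ![(1 : R), -1]) ≠ 0 := by
  intro h p u E Bset e₁₁
  -- basic facts about `h`
  have hsh : star h = h := by
    show star (algebraMap ℂ R (1/2)) = algebraMap ℂ R (1/2)
    rw [Algebra.algebraMap_eq_smul_one, star_smul, star_one]; norm_num
  have hhalf : h + h = 1 := by
    show algebraMap ℂ R (1/2) + algebraMap ℂ R (1/2) = 1
    rw [← map_add]; norm_num
  -- entry descriptions
  have hpij : ∀ i j, p i j = h := by intro i j; fin_cases i <;> fin_cases j <;> simp [p]
  have huij : ∀ i j, u i j = v * h + w * ((1:Matrix (Fin 2) (Fin 2) R) i j - h) := by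
    intro i j
    simp [u, Matrix.add_apply, Matrix.smul_apply, Matrix.sub_apply, smul_eq_mul, hpij]
  have hstaru : star u = star v • p + star w • (1 - p) := by
    ext i j
    fin_cases i <;> fin_cases j <;>
      simp [u, p, Matrix.star_apply, Matrix.add_apply, Matrix.smul_apply, Matrix.sub_apply,
        Matrix.one_apply, smul_eq_mul, star_mul', hsh, star_add, star_sub, star_one]
  have hsuij : ∀ i j, (star u) i j
      = star v * h + star w * ((1:Matrix (Fin 2) (Fin 2) R) i j - h) := by
    intro i j
    rw [hstaru]
    simp [Matrix.add_apply, Matrix.smul_apply, Matrix.sub_apply, smul_eq_mul, hpij]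
  have h1mh : (1:R) - h = h := by linear_combination -hhalf
  have hu' : ∀ i j, u i j = v * h + (if i = j then w * h else - (w * h)) := by
    intro i j
    rw [huij, Matrix.one_apply]
    split
    · rw [h1mh]
    · rw [zero_sub, mul_neg]
  have hsu' : ∀ i j, (star u) i j
      = star v * h + (if i = j then star w * h else - (star w * h)) := by
    intro i j
    rw [hsuij, Matrix.one_apply]
    split
    · rw [h1mh]
    · rw [zero_sub, mul_neg]
  -- moments of monomials
  have τmono : ∀ n m k l : ℕ,
      τ (v ^ n * w ^ m * star v ^ k * star w ^ l) = if n = k ∧ m = l then 1 else 0 := by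
    intro n m k l
    by_cases hb : n = k ∧ m = l
    · obtain ⟨rfl, rfl⟩ := hb
      rw [show v ^ n * w ^ m * star v ^ n * star w ^ m
          = (v * star v) ^ n * (w * star w) ^ m by rw [mul_pow, mul_pow]; ring,
        hv, hw, one_pow, one_pow, mul_one, hτ1, if_pos ⟨rfl, rfl⟩]
    · rw [hHaar n m k l (by tauto), if_neg hb]
  have τh : ∀ (j : ℕ) (x : R), τ (h^j * x) = (1/2:ℂ)^j * τ x := by
    intro j x
    have : h^j * x = ((1/2:ℂ)^j) • x := by
      show (algebraMap ℂ R (1/2))^j * x = _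
      rw [Algebra.smul_def, map_pow]
    rw [this, map_smul, smul_eq_mul]
  -- specific trace values
  have τT : τ ((star v + star w) * (v + w)) = 2 := by
    rw [show (star v + star w) * (v + w)
        = v^1*w^0*star v^1*star w^0 + v^0*w^1*star v^1*star w^0
          + v^1*w^0*star v^0*star w^1 + v^0*w^1*star v^0*star w^1 by ring]
    simp only [map_add, τmono]
    norm_num
  have τT' : τ ((star v - star w) * (v - w)) = 2 := by
    rw [show (star v - star w) * (v - w)
        = v^1*w^0*star v^1*star w^0 - v^0*w^1*star v^1*star w^0
          - v^1*w^0*star v^0*star w^1 + v^0*w^1*star v^0*star w^1 by ring]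
    simp only [map_add, map_sub, τmono]
    norm_num
  have τT2 : τ (((star v + star w) * (v + w))^2) = 6 := by
    rw [show ((star v + star w) * (v + w))^2
        = v^2*w^0*star v^2*star w^0 + v^0*w^2*star v^2*star w^0
          + v^2*w^0*star v^0*star w^2 + v^0*w^2*star v^0*star w^2
          + (v^1*w^1*star v^2*star w^0 + v^1*w^1*star v^2*star w^0)
          + (v^2*w^0*star v^1*star w^1 + v^2*w^0*star v^1*star w^1)
          + (v^1*w^1*star v^1*star w^1 + v^1*w^1*star v^1*star w^1)
          + (v^1*w^1*star v^1*star w^1 + v^1*w^1*star v^1*star w^1)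
          + (v^0*w^2*star v^1*star w^1 + v^0*w^2*star v^1*star w^1)
          + (v^1*w^1*star v^0*star w^2 + v^1*w^1*star v^0*star w^2) by ring]
    simp only [map_add, τmono]
    norm_num
  have τS2 : τ (((star v - star w) * (v + w))^2) = -2 := by
    rw [show ((star v - star w) * (v + w))^2
        = v^2*w^0*star v^2*star w^0 + v^0*w^2*star v^2*star w^0
          + v^2*w^0*star v^0*star w^2 + v^0*w^2*star v^0*star w^2
          + (v^1*w^1*star v^2*star w^0 + v^1*w^1*star v^2*star w^0)
          - (v^2*w^0*star v^1*star w^1 + v^2*w^0*star v^1*star w^1)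
          - (v^1*w^1*star v^1*star w^1 + v^1*w^1*star v^1*star w^1)
          - (v^1*w^1*star v^1*star w^1 + v^1*w^1*star v^1*star w^1)
          - (v^0*w^2*star v^1*star w^1 + v^0*w^2*star v^1*star w^1)
          + (v^1*w^1*star v^0*star w^2 + v^1*w^1*star v^0*star w^2) by ring]
    simp only [map_add, map_sub, τmono]
    norm_num
  refine ⟨?_, ?_, ?_, ?_⟩
  · -- unitarity
    have hpp : p * p = p := by
      ext i j
      fin_cases i <;> fin_cases j <;>
        simp [p, Matrix.mul_apply, Fin.sum_univ_two] <;> linear_combination h*hhalf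
    have hqq : (1-p) * (1-p) = 1-p := by
      rw [mul_sub, mul_one, sub_mul, one_mul, hpp, sub_self, sub_zero]
    have expand : ∀ a b c d : R, (a • p + b • (1-p)) * (c • p + d • (1-p))
        = (a*c) • p + (b*d) • (1-p) := by
      intro a b c d
      rw [add_mul, mul_add, mul_add, smul_mul_smul_comm, smul_mul_smul_comm,
        smul_mul_smul_comm, smul_mul_smul_comm, hpp, hqq, mul_sub, mul_one, hpp, sub_self,
        sub_mul, one_mul, hpp, sub_self, smul_zero, smul_zero, add_zero, zero_add]
    constructor
    · rw [hstaru, expand, hv, hw, one_smul, one_smul, add_sub_cancel]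
    · rw [hstaru, expand, mul_comm (star v) v, mul_comm (star w) w, hv, hw, one_smul, one_smul,
        add_sub_cancel]
  · -- balancedness
    have hgh : ∀ (x : R) (S : Submodule ℂ R), x ∈ S → x * h ∈ S := by
      intro x S hx
      have : x * h = (1/2 : ℂ) • x := by
        show x * algebraMap ℂ R (1/2) = _
        rw [Algebra.smul_def, mul_comm]
      rw [this]; exact S.smul_mem _ hx
    have hpmu : PM v w 1 u := by
      intro i j
      rw [huij, mul_sub]
      refine add_mem (hgh v _ (v_mem_grSpan v w)) (sub_mem ?_ (hgh w _ (w_mem_grSpan v w)))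
      rw [Matrix.one_apply]
      split
      · rw [mul_one]; exact w_mem_grSpan v w
      · rw [mul_zero]; exact zero_mem _
    have hpmsu : PM v w (-1) (star u) := by
      intro i j
      rw [hsuij, mul_sub]
      refine add_mem (hgh _ _ (sv_mem_grSpan v w)) (sub_mem ?_ (hgh _ _ (sw_mem_grSpan v w)))
      rw [Matrix.one_apply]
      split
      · rw [mul_one]; exact sw_mem_grSpan v w
      · rw [mul_zero]; exact zero_mem _
    have hpmb : ∀ M ∈ Bset, PM v w 0 M := by
      rintro M ⟨z₁, z₂, rfl⟩ i j
      rw [Matrix.diagonal_apply]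
      split
      · fin_cases i <;>
          simp only [Matrix.cons_val_zero, Matrix.cons_val_one, Matrix.head_cons,
            Algebra.algebraMap_eq_smul_one] <;>
          exact Submodule.smul_mem _ _ (one_mem_grSpan v w)
      · exact zero_mem _
    intro m ε b hb hcount
    set X : Fin (m+1) → Matrix (Fin 2) (Fin 2) R := fun j => if ε j then u else star u with hX
    set g : Fin (m+1) → ℤ := fun j => if ε j then 1 else -1 with hg
    have hXg : ∀ j, PM v w (g j) (X j) := by
      intro j
      by_cases hj : ε j <;> simp only [hX, hg, hj, if_true, if_false] <;>
        first | exact hpmu | exact hpmsu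
    have hP : PM v w (g 0 + ∑ i : Fin m, g i.succ)
        (X 0 * (List.ofFn fun i : Fin m => b i * X i.succ).prod) := by
      refine pm_mul (hXg 0) (pm_listProd v w m _ (fun i => g i.succ) (fun i => ?_))
      have := pm_mul (hpmb _ (hb i)) (hXg i.succ)
      rwa [zero_add] at this
    have hdsum : g 0 + ∑ i : Fin m, g i.succ ≠ 0 := by
      rw [← Fin.sum_univ_succ g]
      have hsum : ∑ j, g j
          = 2 * ((Finset.univ.filter fun j => ε j = true).card : ℤ) - (m+1) := by
        calc ∑ j, g j = ∑ j, (2 * (if ε j = true then (1:ℤ) else 0) - 1) :=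
              Finset.sum_congr rfl (fun j _ => by by_cases hj : ε j <;> simp [hg, hj])
          _ = 2 * ((Finset.univ.filter fun j => ε j = true).card : ℤ) - (m+1) := by
              rw [Finset.sum_sub_distrib, ← Finset.mul_sum, Finset.sum_boole, Finset.sum_const,
                Finset.card_univ, Fintype.card_fin]
              simp
      rw [hsum]
      intro hcontr
      apply hcount
      omega
    have h00 := grSpan_tau τ v w hHaar hdsum (hP 0 0)
    have h11 := grSpan_tau τ v w hHaar hdsum (hP 1 1)
    show Matrix.diagonal _ = 0
    rw [h00, h11, map_zero]
    have h0 : ![(0:R), 0] = 0 := by funext i; fin_cases i <;> rfl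
    rw [h0]
    exact Matrix.diagonal_zero
  · -- the explicit moment computation
    have hE1 : E (star u * e₁₁ * u) = Matrix.diagonal ![h, h] := by
      have t00 : τ ((star u * e₁₁ * u) 0 0) = 1/2 := by
        have e : (star u * e₁₁ * u) 0 0 = h^2 * ((star v + star w) * (v + w)) := by
          simp [e₁₁, Matrix.mul_apply, Fin.sum_univ_two, Matrix.diagonal_apply, hu', hsu']
          ring
        rw [e, τh, τT]; norm_num
      have t11 : τ ((star u * e₁₁ * u) 1 1) = 1/2 := by
        have e : (star u * e₁₁ * u) 1 1 = h^2 * ((star v - star w) * (v - w)) := by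
          simp [e₁₁, Matrix.mul_apply, Fin.sum_univ_two, Matrix.diagonal_apply, hu', hsu']
          ring
        rw [e, τh, τT']; norm_num
      show Matrix.diagonal _ = _
      rw [t00, t11]
    have hE2 : E (u * e₁₁ * star u) = Matrix.diagonal ![h, h] := by
      have t00 : τ ((u * e₁₁ * star u) 0 0) = 1/2 := by
        have e : (u * e₁₁ * star u) 0 0 = h^2 * ((star v + star w) * (v + w)) := by
          simp [e₁₁, Matrix.mul_apply, Fin.sum_univ_two, Matrix.diagonal_apply, hu', hsu']
          ring
        rw [e, τh, τT]; norm_num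
      have t11 : τ ((u * e₁₁ * star u) 1 1) = 1/2 := by
        have e : (u * e₁₁ * star u) 1 1 = h^2 * ((star v - star w) * (v - w)) := by
          simp [e₁₁, Matrix.mul_apply, Fin.sum_univ_two, Matrix.diagonal_apply, hu', hsu']
          ring
        rw [e, τh, τT']; norm_num
      show Matrix.diagonal _ = _
      rw [t00, t11]
    rw [hE1, hE2]
    have k00 : τ (((star u * e₁₁ * u - Matrix.diagonal ![h, h]) * e₁₁ *
        (u * e₁₁ * star u - Matrix.diagonal ![h, h])) 0 0) = 1/8 := by
      have e : ((star u * e₁₁ * u - Matrix.diagonal ![h, h]) * e₁₁ *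
          (u * e₁₁ * star u - Matrix.diagonal ![h, h])) 0 0
          = h^4 * ((star v + star w) * (v + w))^2
            - h^3 * (((star v + star w) * (v + w)) + ((star v + star w) * (v + w)))
            + h^2 * 1 := by
        simp [e₁₁, Matrix.mul_apply, Fin.sum_univ_two, Matrix.sub_apply, Matrix.diagonal_apply,
          hu', hsu']
        ring
      rw [e, map_add, map_sub, τh, τh, τh, τT2, map_add, τT, hτ1]
      norm_num
    have k11 : τ (((star u * e₁₁ * u - Matrix.diagonal ![h, h]) * e₁₁ *
        (u * e₁₁ * star u - Matrix.diagonal ![h, h])) 1 1) = -(1/8) := by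
      have e : ((star u * e₁₁ * u - Matrix.diagonal ![h, h]) * e₁₁ *
          (u * e₁₁ * star u - Matrix.diagonal ![h, h])) 1 1
          = h^4 * ((star v - star w) * (v + w))^2 := by
        simp [e₁₁, Matrix.mul_apply, Fin.sum_univ_two, Matrix.sub_apply, Matrix.diagonal_apply,
          hu', hsu']
        ring
      rw [e, τh, τS2]
      norm_num
    show Matrix.diagonal _ = _
    rw [k00, k11]
    ext i j
    fin_cases i <;> fin_cases j <;>
      simp [Matrix.diagonal_apply, Matrix.smul_apply, smul_eq_mul, map_neg, mul_neg, mul_one]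
  · -- nonvanishing
    intro hcontr
    have h00 := congrFun (congrFun hcontr 0) 0
    simp [Matrix.smul_apply, Matrix.diagonal_apply, smul_eq_mul] at h00
end

section
/- Every B-valued random variable a in a B-valued W*-noncommutative probability space (A,E) with E faithful has a bipolar decomposition (u,x) that is standard, even, and minimal. Concretely, if a = w|a| is the polar decomposition, then in A' = A⊕A with E'(a_1⊕a_2) = (E(a_1)+E(a_2))/2 and B embedded diagonally, the pair u = w⊕(−w), x = |a|⊕(−|a|) satisfies: x is self-adjoint, u is a partial isometry with u*u equal to the support projection of x, ux has the same B-valued *-distribution as a, all odd B-valued moments of x vanish, and the symmetry s = 1⊕(−1) commutes with u, x, and B and satisfies x = s|x|. -/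
open scoped BigOperators

private lemma diag_prod' {α : Type*} {A : Type*} [Ring A] (f : α → A) :
    ∀ l : List α, ((l.map fun q => ((f q, f q) : A × A)).prod)
      = ((l.map f).prod, (l.map f).prod)
  | [] => by simp [Prod.ext_iff]
  | q :: l => by
      simp [diag_prod' f l, Prod.ext_iff]

private lemma neg_prod' {α : Type*} {A : Type*} [Ring A] (f : α → A) :
    ∀ l : List α, ((l.map fun q => ((f q, -(f q)) : A × A)).prod)
      = ((l.map f).prod, (-1) ^ l.length * (l.map f).prod)
  | [] => by simp [Prod.ext_iff]
  | q :: l => by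
      simp only [List.map_cons, List.prod_cons, neg_prod' f l, List.length_cons,
        Prod.mk_mul_mk, pow_succ]
      refine Prod.ext rfl ?_
      show -f q * ((-1) ^ l.length * (List.map f l).prod)
        = (-1) ^ l.length * -1 * (f q * (List.map f l).prod)
      rw [neg_mul, ← mul_assoc, ((Commute.neg_one_right (f q)).pow_right l.length).eq]
      simp [mul_assoc, mul_neg, neg_mul]

/-- Every B-valued random variable `a` has a bipolar decomposition that is
standard, even and minimal: if `a = w|a|` is the polar decomposition, then in
`A' = A ⊕ A` with `E'(a₁ ⊕ a₂) = (E a₁ + E a₂)/2` and `B` embedded diagonally,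
the pair `u = w ⊕ (−w)`, `x = |a| ⊕ (−|a|)` works, with symmetry
`s = 1 ⊕ (−1)`. -/
theorem bipolar_standard_even_minimal_exists
    {A : Type*} [Ring A] [StarRing A] [Algebra ℂ A] [StarModule ℂ A]
    (B : StarSubalgebra ℂ A) (E : A →ₗ[ℂ] A)
    (hErange : ∀ a : A, E a ∈ B)
    (hEid : ∀ b ∈ B, E b = b)
    (hEstar : ∀ a : A, E (star a) = star (E a))
    (hEbimod : ∀ a : A, ∀ b₁ ∈ B, ∀ b₂ ∈ B, E (b₁ * a * b₂) = b₁ * E a * b₂)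
    (hEfaithful : ∀ a : A, E (star a * a) = 0 → a = 0)
    (a w x₀ : A)
    -- a = w x₀ is the polar decomposition of a
    (ha : a = w * x₀)
    (hxsa : star x₀ = x₀)
    (hxpos : ∃ y : A, x₀ = star y * y)
    (hxsq : x₀ * x₀ = star a * a)
    (hwiso : w * star w * w = w)
    (hsupp : star w * w * x₀ = x₀)
    (hsuppmin : ∀ p : A, star p = p → p * p = p → p * x₀ = x₀ →
      p * (star w * w) = star w * w) :
    let ι : A → A × A := fun c => (c, c)
    let E' : A × A → A × A := fun z =>
      ((2⁻¹ : ℂ) • (E z.1 + E z.2), (2⁻¹ : ℂ) • (E z.1 + E z.2))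
    let u : A × A := (w, -w)
    let x : A × A := (x₀, -x₀)
    let s : A × A := (1, -1)
    -- x is self-adjoint
    star x = x ∧
    -- u is a partial isometry
    u * star u * u = u ∧
    -- u* u is the support projection of x (minimality)
    (star (star u * u) = star u * u ∧ (star u * u) * (star u * u) = star u * u ∧
      (star u * u) * x = x ∧
      ∀ p : A × A, star p = p → p * p = p → p * x = x →
        p * (star u * u) = star u * u) ∧
    -- ux has the same B-valued *-distribution as a
    (∀ l : List (Bool × A), (∀ q ∈ l, q.2 ∈ B) →
      E' ((l.map fun q => (if q.1 then u * x else star (u * x)) * ι q.2).prod)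
        = ι (E ((l.map fun q => (if q.1 then a else star a) * q.2).prod))) ∧
    -- all odd B-valued moments of x vanish (evenness)
    (∀ bs : List A, bs ≠ [] → (∀ b ∈ bs, b ∈ B) → Even bs.length →
      E' (x * (bs.map fun b => ι b * x).prod) = 0) ∧
    -- s is a symmetry commuting with u, x and B, and x = s |x|
    (star s = s ∧ s * s = 1 ∧ s * u = u * s ∧ s * x = x * s ∧
      (∀ b ∈ B, s * ι b = ι b * s) ∧ x = s * (x₀, x₀)) := by
  intro ι E' u x s
  have hww : star u * u = ((star w * w, star w * w) : A × A) := by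
    simp [u, Prod.ext_iff, Prod.mk_mul_mk]
  refine ⟨?_, ?_, ⟨?_, ?_, ?_, ?_⟩, ?_, ?_, ?_, ?_, ?_, ?_, ?_, ?_⟩
  · -- star x = x
    simp [x, Prod.ext_iff, hxsa]
  · -- partial isometry
    simp [u, Prod.ext_iff, Prod.mk_mul_mk, hwiso, neg_mul, mul_neg]
  · -- star (u*u) = ...
    rw [hww]; simp [Prod.ext_iff]
  · rw [hww]
    simp only [Prod.mk_mul_mk, Prod.ext_iff]
    constructor <;> · rw [mul_assoc, ← mul_assoc w, hwiso]
  · rw [hww]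
    simp [x, Prod.ext_iff, Prod.mk_mul_mk, hsupp, mul_neg]
  · -- minimality
    rw [hww]
    rintro ⟨p₁, p₂⟩ hsp hpp hpx
    simp only [x, Prod.ext_iff, Prod.mk_mul_mk, Prod.fst, Prod.snd] at hsp hpp hpx ⊢
    obtain ⟨hpx1, hpx2⟩ := hpx
    have hpx2' : p₂ * x₀ = x₀ := by
      have := hpx2
      rw [mul_neg] at this
      exact neg_injective this
    exact ⟨hsuppmin p₁ hsp.1 hpp.1 hpx1, hsuppmin p₂ hsp.2 hpp.2 hpx2'⟩
  · -- distribution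
    intro l _
    have hux : u * x = ((a, a) : A × A) := by
      simp [u, x, Prod.mk_mul_mk, ha, neg_mul_neg]
    have hfac : (fun q : Bool × A => (if q.1 then u * x else star (u * x)) * ι q.2)
        = fun q : Bool × A =>
          (((if q.1 then a else star a) * q.2, (if q.1 then a else star a) * q.2) : A × A) := by
      funext q
      cases q.1 <;> simp [hux, ι, Prod.mk_mul_mk, Prod.ext_iff]
    rw [hfac, diag_prod' (fun q : Bool × A => (if q.1 then a else star a) * q.2) l]
    show ((2⁻¹ : ℂ) • (E _ + E _), (2⁻¹ : ℂ) • (E _ + E _)) = (E _, E _)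
    have h2 : ∀ c : A, (2⁻¹ : ℂ) • (E c + E c) = E c := by
      intro c
      rw [← two_smul ℂ (E c), smul_smul]
      norm_num
    rw [h2]
  · -- evenness
    intro bs _ _ heven
    have hfac : (fun b : A => ι b * x)
        = fun b : A => ((b * x₀, -(b * x₀)) : A × A) := by
      funext b
      simp [ι, x, Prod.mk_mul_mk, mul_neg]
    rw [hfac, neg_prod' (fun b : A => b * x₀) bs, heven.neg_one_pow, one_mul]
    show ((2⁻¹ : ℂ) • (E (x₀ * _) + E (-x₀ * _)), (2⁻¹ : ℂ) • (E (x₀ * _) + E (-x₀ * _))) = 0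
    rw [neg_mul, map_neg, add_neg_cancel, smul_zero]
    rfl
  · simp [s, Prod.ext_iff]
  · simp [s, Prod.mk_mul_mk, Prod.ext_iff]
  · simp [s, u, Prod.mk_mul_mk, Prod.ext_iff]
  · simp [s, x, Prod.mk_mul_mk, Prod.ext_iff]
  · intro b _
    simp [s, ι, Prod.mk_mul_mk, Prod.ext_iff]
  · simp [s, x, Prod.mk_mul_mk, Prod.ext_iff]
end

section
/- Let B be a unital *-algebra and (A,E) a B-valued *-noncommutative probability space. Suppose y = ux where u is unitary with E(u)=0, x = x* , and u and x are *-free over B. Then for all integers n ≥ 0: E((yy*)^n) = E(u E(x^{2n}) u*) = E(u E((y*y)^n) u*). -/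
/-!
Since `u` is unitary, `y*y = x²` and `yy* = u x² u*`, so `(yy*)ⁿ = u x²ⁿ u*` and
`(y*y)ⁿ = x²ⁿ`. Both equalities thus reduce to `E(u x²ⁿ u*) = E(u E(x²ⁿ) u*)`, which is
freeness applied to the alternating centered word `u · (x²ⁿ - E(x²ⁿ)) · u*`.
-/

open scoped BigOperators

/-- Two subsets `S`, `T` (each containing `B`) are free with respect to `E`:
any alternating product of `E`-centered elements from `S` and `T` has zero
expectation. The label `true` marks elements of `S`, `false` elements of `T`. -/
def FreePair {A : Type*} [Ring A] [StarRing A] [Algebra ℂ A]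
    (E : A →ₗ[ℂ] A) (S T : Set A) : Prop :=
  ∀ l : List (A × Bool), l ≠ [] →
    (∀ p ∈ l, E p.1 = 0 ∧ (p.2 = true → p.1 ∈ S) ∧ (p.2 = false → p.1 ∈ T)) →
    l.Chain' (fun p q => p.2 ≠ q.2) →
    E (l.map Prod.fst).prod = 0

namespace FreePair

variable {A : Type*} [Ring A] [StarRing A] [Algebra ℂ A] {E : A →ₗ[ℂ] A} {S T : Set A}

theorem apply_mul_mul_eq_zero (hfree : FreePair E S T) {s₁ t s₂ : A}
    (hs₁ : s₁ ∈ S) (ht : t ∈ T) (hs₂ : s₂ ∈ S)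
    (hEs₁ : E s₁ = 0) (hEt : E t = 0) (hEs₂ : E s₂ = 0) :
    E (s₁ * t * s₂) = 0 := by
  have h := hfree [(s₁, true), (t, false), (s₂, true)] (List.cons_ne_nil _ _)
    (by
      intro p hp
      simp only [List.mem_cons, List.not_mem_nil, or_false] at hp
      rcases hp with rfl | rfl | rfl
      · exact ⟨hEs₁, fun _ => hs₁, by simp⟩
      · exact ⟨hEt, by simp, fun _ => ht⟩
      · exact ⟨hEs₂, fun _ => hs₂, by simp⟩)
    (show List.IsChain _ _ by simp [List.isChain_cons_cons])
  simpa [mul_assoc] using h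

theorem apply_mul_mul_eq_apply_mul_apply_mul (hfree : FreePair E S T) {s₁ t s₂ : A}
    (hs₁ : s₁ ∈ S) (ht : t ∈ T) (hs₂ : s₂ ∈ S)
    (hEs₁ : E s₁ = 0) (hEs₂ : E s₂ = 0)
    (hEtT : E t ∈ T) (hEEt : E (E t) = E t) (hT : ∀ a ∈ T, ∀ b ∈ T, a - b ∈ T) :
    E (s₁ * t * s₂) = E (s₁ * E t * s₂) := by
  have hcentered : E (t - E t) = 0 := by rw [map_sub, hEEt, sub_self]
  have h := hfree.apply_mul_mul_eq_zero hs₁ (hT _ ht _ hEtT) hs₂ hEs₁ hcentered hEs₂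
  rwa [mul_sub, sub_mul, map_sub, sub_eq_zero] at h

end FreePair

theorem haar_conjugation_of_even_powers_general
    {A : Type*} [Ring A] [StarRing A] [Algebra ℂ A] [StarModule ℂ A]
    (B : StarSubalgebra ℂ A) (E : A →ₗ[ℂ] A)
    (hErange : ∀ a : A, E a ∈ B)
    (hEid : ∀ b ∈ B, E b = b)
    (hEstar : ∀ a : A, E (star a) = star (E a))
    (u x y : A)
    (huu : u * star u = 1) (hsuu : star u * u = 1)
    (hEu : E u = 0) (hxsa : star x = x)
    (hfree : FreePair E
      (StarAlgebra.adjoin ℂ (insert u (B : Set A)) : StarSubalgebra ℂ A)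
      (StarAlgebra.adjoin ℂ (insert x (B : Set A)) : StarSubalgebra ℂ A))
    (hy : y = u * x) :
    ∀ n : ℕ,
      E ((y * star y) ^ n) = E (u * E (x ^ (2 * n)) * star u) ∧
      E (u * E (x ^ (2 * n)) * star u) = E (u * E ((star y * y) ^ n) * star u) := by
  intro n
  let U : Aˣ := ⟨u, star u, huu, hsuu⟩
  have hstar_y : star y = x * star u := by rw [hy, star_mul, hxsa]
  have hstar_y_mul : star y * y = x ^ 2 := by
    rw [hstar_y, hy, mul_assoc, ← mul_assoc (star u), hsuu, one_mul, sq]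
  have hmul_star_y : y * star y = U * x ^ 2 * ↑U⁻¹ := by
    rw [hstar_y, hy]
    simp only [U, Units.inv_mk, sq, mul_assoc]
  have hpow : (y * star y) ^ n = u * x ^ (2 * n) * star u := by
    rw [hmul_star_y, Units.conj_pow, ← pow_mul]; rfl
  have hmem_u : u ∈ StarAlgebra.adjoin ℂ (insert u (B : Set A)) :=
    StarAlgebra.subset_adjoin ℂ _ (Set.mem_insert _ _)
  have hmem_x : x ∈ StarAlgebra.adjoin ℂ (insert x (B : Set A)) :=
    StarAlgebra.subset_adjoin ℂ _ (Set.mem_insert _ _)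
  have hkey := hfree.apply_mul_mul_eq_apply_mul_apply_mul hmem_u (pow_mem hmem_x (2 * n))
    (star_mem hmem_u) hEu (by rw [hEstar, hEu, star_zero])
    (StarAlgebra.subset_adjoin ℂ _ (Set.mem_insert_of_mem _ (hErange _)))
    (hEid _ (hErange _)) (fun _ ha _ hb => sub_mem ha hb)
  exact ⟨by rw [hpow, hkey], by rw [hstar_y_mul, ← pow_mul]⟩

/-- If `y = ux` with `u` unitary, `E(u) = 0`, `x` self-adjoint, and `u`, `x`
*-free over `B`, then `E((yy*)ⁿ) = E(u E(x^{2n}) u*) = E(u E((y*y)ⁿ) u*)`. -/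
theorem haar_conjugation_of_even_powers
    {A : Type*} [Ring A] [StarRing A] [Algebra ℂ A] [StarModule ℂ A]
    (B : StarSubalgebra ℂ A) (E : A →ₗ[ℂ] A)
    (hErange : ∀ a : A, E a ∈ B)
    (hEid : ∀ b ∈ B, E b = b)
    (hEstar : ∀ a : A, E (star a) = star (E a))
    (hEbimod : ∀ a : A, ∀ b₁ ∈ B, ∀ b₂ ∈ B, E (b₁ * a * b₂) = b₁ * E a * b₂)
    (u x y : A)
    (huu : u * star u = 1) (hsuu : star u * u = 1)
    (hEu : E u = 0) (hxsa : star x = x)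
    (hfree : FreePair E
      (StarAlgebra.adjoin ℂ (insert u (B : Set A)) : StarSubalgebra ℂ A)
      (StarAlgebra.adjoin ℂ (insert x (B : Set A)) : StarSubalgebra ℂ A))
    (hy : y = u * x) :
    ∀ n : ℕ,
      E ((y * star y) ^ n) = E (u * E (x ^ (2 * n)) * star u) ∧
      E (u * E (x ^ (2 * n)) * star u) = E (u * E ((star y * y) ^ n) * star u) :=
  haar_conjugation_of_even_powers_general B E hErange hEid hEstar u x y huu hsuu hEu hxsa hfree hy
end

section
/- Let B be a unital *-algebra and (A,E) a B-valued *-noncommutative probability space. Suppose y = ux with u unitary, E(u)=0, x self-adjoint, and u, x *-free over B. Then for all integers n,m,k ≥ 0: E((yy*)^n (y*y)^m (yy*)^k) = E(u E(x^{2n} E(u* E(x^{2m}) u) x^{2k}) u*) − E(u E(x^{2n}) E(u* E(x^{2m}) u) E(x^{2k}) u*) + E(u E(x^{2n}) u* E(x^{2m}) u E(x^{2k}) u*). -/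
/-!
As `u` is unitary, `(yy*)ⁿ = u x²ⁿ u*` and `y*y = x²`, so the moment is `E(u a u* b u c u*)` with
`a, b, c` even powers of `x`. Freeness kills not only alternating words of centred letters but
every alternating word of length at least three whose interior letters are centred: the
`B`-valued expectations of its end letters factor out of `E`. In particular
`E(s t s') = E(s E(t) s')`. Splitting `b = (b - E b) + E b`, the centred part contributes nothing;
in the remaining word `u a d c u*` with `d = u* E(b) u`, splitting `d`, `a`, `c` into centred
parts and expectations leaves exactly the three terms of the formula.
-/

open scoped BigOperators

structure IsConditionalExpectation {R A : Type*} [CommRing R] [Ring A] [Algebra R A]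
    (B : Subalgebra R A) (E : A →ₗ[R] A) : Prop where
  mem : ∀ a, E a ∈ B
  eq_self_of_mem : ∀ b ∈ B, E b = b
  mul_mul : ∀ a, ∀ b₁ ∈ B, ∀ b₂ ∈ B, E (b₁ * a * b₂) = b₁ * E a * b₂

namespace IsConditionalExpectation

variable {R A : Type*} [CommRing R] [Ring A] [Algebra R A] {B : Subalgebra R A} {E : A →ₗ[R] A}

theorem map_mul_left (hE : IsConditionalExpectation B E) {b : A} (hb : b ∈ B) (a : A) :
    E (b * a) = b * E a := by
  simpa using hE.mul_mul a b hb 1 B.one_mem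

theorem map_mul_right (hE : IsConditionalExpectation B E) (a : A) {b : A} (hb : b ∈ B) :
    E (a * b) = E a * b := by
  simpa using hE.mul_mul a 1 B.one_mem b hb

theorem map_map (hE : IsConditionalExpectation B E) (a : A) : E (E a) = E a :=
  hE.eq_self_of_mem _ (hE.mem a)

theorem map_sub_map (hE : IsConditionalExpectation B E) (a : A) : E (a - E a) = 0 := by
  rw [map_sub, hE.map_map, sub_self]

theorem sub_map_mem (hE : IsConditionalExpectation B E) {S : Subalgebra R A} (hBS : B ≤ S)
    {a : A} (ha : a ∈ S) : a - E a ∈ S :=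
  sub_mem ha (hBS (hE.mem a))

theorem map_mul_eq_zero_of_left (hE : IsConditionalExpectation B E) {p w : A} (hw : E w = 0)
    (hpw : E ((p - E p) * w) = 0) : E (p * w) = 0 := by
  rw [show p * w = (p - E p) * w + E p * w by noncomm_ring, map_add, hpw,
    hE.map_mul_left (hE.mem p), hw, mul_zero, add_zero]

theorem map_mul_eq_zero_of_right (hE : IsConditionalExpectation B E) {w q : A} (hw : E w = 0)
    (hwq : E (w * (q - E q)) = 0) : E (w * q) = 0 := by
  rw [show w * q = w * (q - E q) + w * E q by noncomm_ring, map_add, hwq,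
    hE.map_mul_right _ (hE.mem q), hw, zero_mul, add_zero]

end IsConditionalExpectation

namespace FreePair

variable {A : Type*} [Ring A] [StarRing A] [Algebra ℂ A] {B S T : Subalgebra ℂ A}
  {E : A →ₗ[ℂ] A}

-- `FreePair` with `List.IsChain` in place of the deprecated `List.Chain'`.
theorem map_prod_eq_zero (hfree : FreePair E S T) (l : List (A × Bool)) (hl : l ≠ [])
    (hletters : ∀ p ∈ l, E p.1 = 0 ∧ (p.2 = true → p.1 ∈ S) ∧ (p.2 = false → p.1 ∈ T))
    (halt : l.IsChain fun p q => p.2 ≠ q.2) :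
    E (l.map Prod.fst).prod = 0 :=
  hfree l hl hletters halt

theorem map_mul_mul_eq (hfree : FreePair E S T) (hE : IsConditionalExpectation B E)
    (hBS : B ≤ S) (hBT : B ≤ T) {s t s' : A} (hs : s ∈ S) (ht : t ∈ T) (hs' : s' ∈ S) :
    E (s * t * s') = E (s * E t * s') := by
  have hsc := hE.sub_map_mem hBS hs
  have htc := hE.sub_map_mem hBT ht
  have hsc' := hE.sub_map_mem hBS hs'
  have hts' : E ((t - E t) * s') = 0 := by
    refine hE.map_mul_eq_zero_of_right (hE.map_sub_map t) ?_
    simpa using hfree.map_prod_eq_zero [(t - E t, false), (s' - E s', true)] (by simp)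
      (by simp [hE.map_sub_map, htc, hsc']) (by simp)
  have hsts' : E ((s - E s) * ((t - E t) * s')) = 0 := by
    rw [← mul_assoc]
    refine hE.map_mul_eq_zero_of_right ?_ ?_
    · simpa using hfree.map_prod_eq_zero [(s - E s, true), (t - E t, false)] (by simp)
        (by simp [hE.map_sub_map, htc, hsc]) (by simp)
    · simpa [mul_assoc] using hfree.map_prod_eq_zero
        [(s - E s, true), (t - E t, false), (s' - E s', true)] (by simp)
        (by simp [hE.map_sub_map, htc, hsc, hsc']) (by simp)
  have hcentered : E (s * ((t - E t) * s')) = 0 := hE.map_mul_eq_zero_of_left hts' hsts'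
  rw [show s * t * s' = s * ((t - E t) * s') + s * E t * s' by noncomm_ring, map_add, hcentered,
    zero_add]

theorem map_word₇_eq_zero_of_map_eq_zero (hfree : FreePair E S T)
    (hE : IsConditionalExpectation B E) (hBS : B ≤ S) (hBT : B ≤ T) {s₁ s₂ s₃ s₄ a b c : A}
    (hs₁ : s₁ ∈ S) (hs₂ : s₂ ∈ S) (hs₃ : s₃ ∈ S) (hs₄ : s₄ ∈ S)
    (hEs₁ : E s₁ = 0) (hEs₂ : E s₂ = 0) (hEs₃ : E s₃ = 0) (hEs₄ : E s₄ = 0)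
    (ha : a ∈ T) (hb : b ∈ T) (hc : c ∈ T) (hEb : E b = 0) :
    E (s₁ * a * s₂ * b * s₃ * c * s₄) = 0 := by
  have hac := hE.sub_map_mem hBT ha
  have hcc := hE.sub_map_mem hBT hc
  have hp : s₁ * E a * s₂ ∈ S := mul_mem (mul_mem hs₁ (hBS (hE.mem a))) hs₂
  have hq : s₃ * E c * s₄ ∈ S := mul_mem (mul_mem hs₃ (hBS (hE.mem c))) hs₄
  have hpc := hE.sub_map_mem hBS hp
  have hqc := hE.sub_map_mem hBS hq
  have hcentered : E (s₁ * (a - E a) * s₂ * b * s₃ * (c - E c) * s₄) = 0 := by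
    simpa [mul_assoc] using hfree.map_prod_eq_zero [(s₁, true), (a - E a, false), (s₂, true),
      (b, false), (s₃, true), (c - E c, false), (s₄, true)] (by simp)
      (by simp [*, hE.map_sub_map]) (by simp)
  have hleft : E (s₁ * E a * s₂ * (b * s₃ * (c - E c) * s₄)) = 0 := by
    refine hE.map_mul_eq_zero_of_left ?_ ?_
    · simpa [mul_assoc] using hfree.map_prod_eq_zero [(b, false), (s₃, true), (c - E c, false),
        (s₄, true)] (by simp) (by simp [*, hE.map_sub_map]) (by simp)
    · simpa [mul_assoc] using hfree.map_prod_eq_zero [(s₁ * E a * s₂ - E (s₁ * E a * s₂), true),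
        (b, false), (s₃, true), (c - E c, false), (s₄, true)] (by simp)
        (by simp [*, hE.map_sub_map]) (by simp)
  have hright : E (s₁ * (a - E a) * s₂ * b * (s₃ * E c * s₄)) = 0 := by
    refine hE.map_mul_eq_zero_of_right ?_ ?_
    · simpa [mul_assoc] using hfree.map_prod_eq_zero [(s₁, true), (a - E a, false), (s₂, true),
        (b, false)] (by simp) (by simp [*, hE.map_sub_map]) (by simp)
    · simpa [mul_assoc] using hfree.map_prod_eq_zero [(s₁, true), (a - E a, false), (s₂, true),
        (b, false), (s₃ * E c * s₄ - E (s₃ * E c * s₄), true)] (by simp)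
        (by simp [*, hE.map_sub_map]) (by simp)
  have hends : E (s₁ * E a * s₂ * b * (s₃ * E c * s₄)) = 0 := by
    rw [hfree.map_mul_mul_eq hE hBS hBT hp hb hq, hEb, mul_zero, zero_mul, map_zero]
  rw [show s₁ * a * s₂ * b * s₃ * c * s₄
      = s₁ * (a - E a) * s₂ * b * s₃ * (c - E c) * s₄ + s₁ * E a * s₂ * (b * s₃ * (c - E c) * s₄)
        + s₁ * (a - E a) * s₂ * b * (s₃ * E c * s₄) + s₁ * E a * s₂ * b * (s₃ * E c * s₄) by
      noncomm_ring,
    map_add, map_add, map_add, hcentered, hleft, hright, hends, add_zero, add_zero, add_zero]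

theorem map_word₅_eq (hfree : FreePair E S T) (hE : IsConditionalExpectation B E)
    (hBS : B ≤ S) (hBT : B ≤ T) {s₁ d s₂ a c : A} (hs₁ : s₁ ∈ S) (hd : d ∈ S) (hs₂ : s₂ ∈ S)
    (hEs₁ : E s₁ = 0) (hEs₂ : E s₂ = 0) (ha : a ∈ T) (hc : c ∈ T) :
    E (s₁ * a * d * c * s₂)
      = E (s₁ * E (a * E d * c) * s₂) - E (s₁ * E a * E d * E c * s₂)
        + E (s₁ * E a * d * E c * s₂) := by
  have hac := hE.sub_map_mem hBT ha
  have hdc := hE.sub_map_mem hBS hd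
  have hcc := hE.sub_map_mem hBT hc
  have hmiddle : E (s₁ * (a * E d * c) * s₂) = E (s₁ * E (a * E d * c) * s₂) :=
    hfree.map_mul_mul_eq hE hBS hBT hs₁ (mul_mem (mul_mem ha (hBT (hE.mem d))) hc) hs₂
  have hcentered : E (s₁ * (a - E a) * (d - E d) * (c - E c) * s₂) = 0 := by
    simpa [mul_assoc] using hfree.map_prod_eq_zero [(s₁, true), (a - E a, false),
      (d - E d, true), (c - E c, false), (s₂, true)] (by simp)
      (by simp [*, hE.map_sub_map]) (by simp)
  have hleft : E (s₁ * E a * (d - E d) * (c - E c) * s₂) = 0 := by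
    rw [hfree.map_mul_mul_eq hE hBS hBT (mul_mem (mul_mem hs₁ (hBS (hE.mem a))) hdc) hcc hs₂,
      hE.map_sub_map, mul_zero, zero_mul, map_zero]
  have hright : E (s₁ * (a - E a) * ((d - E d) * E c * s₂)) = 0 := by
    rw [hfree.map_mul_mul_eq hE hBS hBT hs₁ hac (mul_mem (mul_mem hdc (hBS (hE.mem c))) hs₂),
      hE.map_sub_map, mul_zero, zero_mul, map_zero]
  rw [show s₁ * a * d * c * s₂
      = s₁ * (a * E d * c) * s₂ + s₁ * (a - E a) * (d - E d) * (c - E c) * s₂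
        + s₁ * E a * (d - E d) * (c - E c) * s₂ + s₁ * (a - E a) * ((d - E d) * E c * s₂)
        + s₁ * E a * d * E c * s₂ - s₁ * E a * E d * E c * s₂ by
      noncomm_ring,
    map_sub, map_add, map_add, map_add, map_add, hmiddle, hcentered, hleft, hright]
  abel

theorem map_word₇_eq (hfree : FreePair E S T) (hE : IsConditionalExpectation B E)
    (hBS : B ≤ S) (hBT : B ≤ T) {s₁ s₂ s₃ s₄ a b c : A}
    (hs₁ : s₁ ∈ S) (hs₂ : s₂ ∈ S) (hs₃ : s₃ ∈ S) (hs₄ : s₄ ∈ S)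
    (hEs₁ : E s₁ = 0) (hEs₂ : E s₂ = 0) (hEs₃ : E s₃ = 0) (hEs₄ : E s₄ = 0)
    (ha : a ∈ T) (hb : b ∈ T) (hc : c ∈ T) :
    E (s₁ * a * s₂ * b * s₃ * c * s₄)
      = E (s₁ * E (a * E (s₂ * E b * s₃) * c) * s₄)
        - E (s₁ * E a * E (s₂ * E b * s₃) * E c * s₄)
        + E (s₁ * E a * s₂ * E b * s₃ * E c * s₄) := by
  have hcentered := hfree.map_word₇_eq_zero_of_map_eq_zero hE hBS hBT hs₁ hs₂ hs₃ hs₄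
    hEs₁ hEs₂ hEs₃ hEs₄ ha (hE.sub_map_mem hBT hb) hc (hE.map_sub_map b)
  have hexpected := hfree.map_word₅_eq hE hBS hBT hs₁
    (mul_mem (mul_mem hs₂ (hBS (hE.mem b))) hs₃) hs₄ hEs₁ hEs₄ ha hc
  rw [show s₁ * a * s₂ * b * s₃ * c * s₄
      = s₁ * a * s₂ * (b - E b) * s₃ * c * s₄ + s₁ * a * (s₂ * E b * s₃) * c * s₄ by
      noncomm_ring,
    map_add, hcentered, zero_add, hexpected]
  simp only [mul_assoc]

end FreePair

/-- If `y = ux` with `u` unitary, `E(u) = 0`, `x` self-adjoint, and `u`, `x`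
*-free over `B`, then for all `n, m, k ≥ 0`:
`E((yy*)ⁿ(y*y)ᵐ(yy*)ᵏ) = E(u E(x^{2n} E(u* E(x^{2m}) u) x^{2k}) u*)
  − E(u E(x^{2n}) E(u* E(x^{2m}) u) E(x^{2k}) u*)
  + E(u E(x^{2n}) u* E(x^{2m}) u E(x^{2k}) u*)`. -/
theorem mixed_moments_formula
    {A : Type*} [Ring A] [StarRing A] [Algebra ℂ A] [StarModule ℂ A]
    (B : StarSubalgebra ℂ A) (E : A →ₗ[ℂ] A)
    (hErange : ∀ a : A, E a ∈ B)
    (hEid : ∀ b ∈ B, E b = b)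
    (hEstar : ∀ a : A, E (star a) = star (E a))
    (hEbimod : ∀ a : A, ∀ b₁ ∈ B, ∀ b₂ ∈ B, E (b₁ * a * b₂) = b₁ * E a * b₂)
    (u x y : A)
    (huu : u * star u = 1) (hsuu : star u * u = 1)
    (hEu : E u = 0) (hxsa : star x = x)
    (hfree : FreePair E
      (StarAlgebra.adjoin ℂ (insert u (B : Set A)) : StarSubalgebra ℂ A)
      (StarAlgebra.adjoin ℂ (insert x (B : Set A)) : StarSubalgebra ℂ A))
    (hy : y = u * x) :
    ∀ n m k : ℕ,
      E ((y * star y) ^ n * (star y * y) ^ m * (y * star y) ^ k)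
        = E (u * E (x ^ (2 * n) * E (star u * E (x ^ (2 * m)) * u) * x ^ (2 * k)) * star u)
          - E (u * E (x ^ (2 * n)) * E (star u * E (x ^ (2 * m)) * u) * E (x ^ (2 * k)) * star u)
          + E (u * E (x ^ (2 * n)) * star u * E (x ^ (2 * m)) * u * E (x ^ (2 * k)) * star u) := by
  intro n m k
  have hE : IsConditionalExpectation B.toSubalgebra E := ⟨hErange, hEid, hEbimod⟩
  have hBS : B.toSubalgebra ≤ (StarAlgebra.adjoin ℂ (insert u (B : Set A))).toSubalgebra :=
    fun b hb => StarAlgebra.subset_adjoin ℂ _ (Set.mem_insert_of_mem _ hb)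
  have hBT : B.toSubalgebra ≤ (StarAlgebra.adjoin ℂ (insert x (B : Set A))).toSubalgebra :=
    fun b hb => StarAlgebra.subset_adjoin ℂ _ (Set.mem_insert_of_mem _ hb)
  have hu : u ∈ StarAlgebra.adjoin ℂ (insert u (B : Set A)) :=
    StarAlgebra.subset_adjoin ℂ _ (Set.mem_insert _ _)
  have hx : x ∈ StarAlgebra.adjoin ℂ (insert x (B : Set A)) :=
    StarAlgebra.subset_adjoin ℂ _ (Set.mem_insert _ _)
  have hEu' : E (star u) = 0 := by rw [hEstar, hEu, star_zero]
  have hu' : star u ∈ StarAlgebra.adjoin ℂ (insert u (B : Set A)) := star_mem hu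
  have hyy : ∀ j : ℕ, (y * star y) ^ j = u * x ^ (2 * j) * star u := fun j => by
    rw [show y * star y = u * x ^ 2 * star u by rw [hy, star_mul, hxsa]; noncomm_ring, pow_mul]
    exact Units.conj_pow ⟨u, star u, huu, hsuu⟩ (x ^ 2) j
  have hy'y : star y * y = x ^ 2 := by
    rw [hy, star_mul, hxsa, mul_assoc, ← mul_assoc (star u), hsuu, one_mul, sq]
  rw [hyy, hyy, hy'y, ← pow_mul]
  simpa only [mul_assoc] using hfree.map_word₇_eq hE hBS hBT hu hu' hu hu'
    hEu hEu' hEu hEu' (pow_mem hx _) (pow_mem hx _) (pow_mem hx _)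
end

section
/- Let y be a B-valued circular element with cumulant maps β_{(1,2)}, β_{(2,1)}. Setting g_1(n)=E((yy*)^n) and g_2(n)=E((y*y)^n), one has g_1(0)=g_2(0)=1 and the recursions, for n≥1: g_1(n) = Σ_{i=1}^n β_{(1,2)}(g_2(i−1)) g_1(n−i) and g_2(n) = Σ_{i=1}^n β_{(2,1)}(g_1(i−1)) g_2(n−i). -/
open scoped BigOperators

/-- The word `y^{ε(1)} b₁ ⋯ y^{ε(n)} bₙ` encoded by a list of pairs
`(ε(j), bⱼ)`, where `true` stands for `y` and `false` for `y*`. -/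
noncomputable def cword {A : Type*} [Monoid A] [StarMul A]
    (y : A) (l : List (Bool × A)) : A :=
  (l.map fun p => (if p.1 then y else star y) * p.2).prod

lemma cword_nil {A : Type*} [Monoid A] [StarMul A] (y : A) :
    cword y [] = 1 := rfl

lemma cword_cons {A : Type*} [Monoid A] [StarMul A] (y : A) (p : Bool × A)
    (l : List (Bool × A)) :
    cword y (p :: l) = (if p.1 then y else star y) * p.2 * cword y l := by
  simp [cword]

def altL {A : Type*} [One A] : Bool → ℕ → List (Bool × A)
  | _, 0 => []
  | ε, k+1 => (ε, (1 : A)) :: altL (!ε) k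

lemma altL_succ {A : Type*} [One A] (ε : Bool) (k : ℕ) :
    altL (A := A) ε (k + 1) = (ε, (1 : A)) :: altL (!ε) k := rfl

lemma altL_length {A : Type*} [One A] : ∀ (ε : Bool) (k : ℕ),
    (altL (A := A) ε k).length = k
  | _, 0 => rfl
  | ε, k+1 => by simp [altL, altL_length (!ε) k]

lemma altL_mem {A : Type*} [One A] : ∀ (ε : Bool) (k : ℕ),
    ∀ q ∈ altL (A := A) ε k, q.2 = 1
  | _, 0 => by simp [altL]
  | ε, k+1 => by
      intro q hq
      rcases List.mem_cons.1 hq with h | h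
      · simp [h]
      · exact altL_mem (!ε) k q h

lemma altL_take {A : Type*} [One A] : ∀ (k m : ℕ) (ε : Bool), k ≤ m →
    (altL (A := A) ε m).take k = altL ε k
  | 0, m, ε, _ => by simp [altL]
  | k+1, 0, ε, h => by omega
  | k+1, m+1, ε, h => by
      simp [altL, altL_take k m (!ε) (by omega)]

lemma altL_drop {A : Type*} [One A] : ∀ (k m : ℕ) (ε : Bool),
    (altL (A := A) ε m).drop k = altL (if k % 2 = 0 then ε else !ε) (m - k)
  | 0, m, ε => by simp
  | k+1, 0, ε => by
      rcases Nat.mod_two_eq_zero_or_one (k+1) with hk | hk <;> simp [altL, hk]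
  | k+1, m+1, ε => by
      have h := altL_drop (A := A) k m (!ε)
      simp only [altL, List.drop_succ_cons, h]
      rcases Nat.mod_two_eq_zero_or_one k with hk | hk
      · have : (k+1) % 2 = 1 := by omega
        simp [hk, this]
      · have : (k+1) % 2 = 0 := by omega
        simp [hk, this]

lemma altL_get {A : Type*} [One A] : ∀ (j m : ℕ) (ε : Bool)
    (h : j < (altL (A := A) ε m).length),
    (altL (A := A) ε m)[j]'h = (if j % 2 = 0 then ε else !ε, 1)
  | j, 0, ε, h => by simp [altL] at h
  | 0, m+1, ε, h => by simp [altL]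
  | j+1, m+1, ε, h => by
      have h' : j < (altL (A := A) (!ε) m).length := by
        simpa [altL] using h
      have := altL_get j m (!ε) h'
      simp only [altL, List.getElem_cons_succ, this]
      rcases Nat.mod_two_eq_zero_or_one j with hk | hk
      · have : (j+1) % 2 = 1 := by omega
        simp [hk, this]
      · have : (j+1) % 2 = 0 := by omega
        simp [hk, this]

lemma cword_altL {A : Type*} [Monoid A] [StarMul A] (y : A) (ε : Bool) :
    ∀ n : ℕ, cword y (altL ε (2 * n)) =
      ((if ε then y else star y) * (if ε then star y else y)) ^ n
  | 0 => by simp [altL, cword_nil]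
  | n+1 => by
      have h2 : 2 * (n + 1) = (2 * n + 1) + 1 := by ring
      rw [h2, altL_succ, altL_succ, cword_cons, cword_cons, Bool.not_not,
        cword_altL y ε n, pow_succ']
      cases ε <;> simp [mul_assoc]

lemma sum_even_aux {M : Type*} [AddCommMonoid M] (h : ℕ → M) :
    ∀ m : ℕ, ∑ j ∈ Finset.range (2 * m + 1),
        (if j % 2 = 0 then h (j / 2) else 0) = ∑ i ∈ Finset.range (m + 1), h i
  | 0 => by simp
  | m+1 => by
      have h2 : 2 * (m + 1) + 1 = (2 * m + 1) + 1 + 1 := by ring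
      rw [h2, Finset.sum_range_succ, Finset.sum_range_succ, sum_even_aux h m]
      have e1 : (2 * m + 1) % 2 = 1 := by omega
      have e2 : (2 * m + 1 + 1) % 2 = 0 := by omega
      have e3 : (2 * m + 1 + 1) / 2 = m + 1 := by omega
      simp [e1, e2, e3, Finset.sum_range_succ]

/-- `y` is B-valued circular with second-order cumulant maps
`β true = β_{(1,2)}`, `β false = β_{(2,1)}`: the moments of `y` satisfy the
noncrossing pair-partition (moment-cumulant) recursion, pairing the first
letter against each later letter of opposite star. -/
def IsCircularWith {A : Type*} [Ring A] [StarRing A] [Algebra ℂ A] [StarModule ℂ A]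
    (B : StarSubalgebra ℂ A) (E : A →ₗ[ℂ] A)
    (y : A) (β : Bool → A →ₗ[ℂ] A) : Prop :=
  ∀ (ε : Bool) (b : A), b ∈ B → ∀ l : List (Bool × A), (∀ q ∈ l, q.2 ∈ B) →
    E (cword y ((ε, b) :: l)) =
      ∑ j : Fin l.length,
        if (l.get j).1 ≠ ε then
          β ε (b * E (cword y (l.take (j : ℕ)))) * (l.get j).2 *
            E (cword y (l.drop ((j : ℕ) + 1)))
        else 0

lemma key_rec {A : Type*} [Ring A] [StarRing A] [Algebra ℂ A] [StarModule ℂ A]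
    (B : StarSubalgebra ℂ A) (E : A →ₗ[ℂ] A) (y : A) (β : Bool → A →ₗ[ℂ] A)
    (hcirc : IsCircularWith B E y β) (ε : Bool) (m : ℕ) :
    E (cword y (altL ε (2 * (m + 1)))) =
      ∑ i ∈ Finset.range (m + 1),
        β ε (E (cword y (altL (!ε) (2 * i)))) *
          E (cword y (altL ε (2 * (m - i)))) := by
  have h2 : 2 * (m + 1) = (2 * m + 1) + 1 := by ring
  rw [h2, altL_succ]
  have hmem : ∀ q ∈ altL (A := A) (!ε) (2 * m + 1), q.2 ∈ B := fun q hq => by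
    rw [altL_mem (!ε) (2 * m + 1) q hq]; exact one_mem B
  rw [hcirc ε 1 (one_mem B) (altL (!ε) (2 * m + 1)) hmem]
  have hlen : (altL (A := A) (!ε) (2 * m + 1)).length = 2 * m + 1 :=
    altL_length _ _
  set h : ℕ → A := fun i =>
    β ε (E (cword y (altL (!ε) (2 * i)))) * E (cword y (altL ε (2 * (m - i))))
    with hh
  have step1 : (∑ j : Fin (altL (A := A) (!ε) (2 * m + 1)).length,
        if ((altL (A := A) (!ε) (2 * m + 1)).get j).1 ≠ ε then
          β ε (1 * E (cword y ((altL (A := A) (!ε) (2 * m + 1)).take (j : ℕ)))) *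
            ((altL (A := A) (!ε) (2 * m + 1)).get j).2 *
            E (cword y ((altL (A := A) (!ε) (2 * m + 1)).drop ((j : ℕ) + 1))) else 0)
      = ∑ j : Fin (altL (A := A) (!ε) (2 * m + 1)).length,
          (fun k => if k % 2 = 0 then h (k / 2) else 0) (j : ℕ) := by
    apply Finset.sum_congr rfl
    intro j _
    have hj : (j : ℕ) < 2 * m + 1 := by simpa only [hlen] using j.2
    have hget : (altL (A := A) (!ε) (2 * m + 1))[(j : ℕ)]'j.2 =
        (if (j : ℕ) % 2 = 0 then !ε else !!ε, 1) := altL_get _ _ _ _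
    rcases Nat.mod_two_eq_zero_or_one (j : ℕ) with hk | hk
    · have ht : (altL (A := A) (!ε) (2 * m + 1)).take (j : ℕ) =
          altL (!ε) (2 * ((j : ℕ) / 2)) := by
        rw [altL_take _ _ _ (by omega)]
        congr 1
        omega
      have h1 : ((j : ℕ) + 1) % 2 ≠ 0 := by omega
      have h3 : 2 * m + 1 - ((j : ℕ) + 1) = 2 * (m - (j : ℕ) / 2) := by omega
      have hd : (altL (A := A) (!ε) (2 * m + 1)).drop ((j : ℕ) + 1) =
          altL ε (2 * (m - (j : ℕ) / 2)) := by
        rw [altL_drop, if_neg h1, Bool.not_not, h3]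
      simp [hget, hk, ht, hd, hh]
    · simp [hget, hk]
  rw [step1, Fin.sum_univ_eq_sum_range (fun k => if k % 2 = 0 then h (k / 2) else 0)
    (altL (A := A) (!ε) (2 * m + 1)).length, hlen, sum_even_aux h m]

/-- Recursions for the even alternating moments of a B-valued circular
element: `g₁(0) = g₂(0) = 1`, `g₁(n) = Σᵢ β_{(1,2)}(g₂(i−1)) g₁(n−i)` and
`g₂(n) = Σᵢ β_{(2,1)}(g₁(i−1)) g₂(n−i)`. -/
theorem circular_moment_recursions
    {A : Type*} [Ring A] [StarRing A] [Algebra ℂ A] [StarModule ℂ A]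
    (B : StarSubalgebra ℂ A) (E : A →ₗ[ℂ] A)
    (hErange : ∀ a : A, E a ∈ B)
    (hEid : ∀ b ∈ B, E b = b)
    (hEstar : ∀ a : A, E (star a) = star (E a))
    (hEbimod : ∀ a : A, ∀ b₁ ∈ B, ∀ b₂ ∈ B, E (b₁ * a * b₂) = b₁ * E a * b₂)
    (y : A) (β : Bool → A →ₗ[ℂ] A)
    (hcirc : IsCircularWith B E y β)
    (g₁ g₂ : ℕ → A)
    (hg₁ : ∀ n, g₁ n = E ((y * star y) ^ n))
    (hg₂ : ∀ n, g₂ n = E ((star y * y) ^ n)) :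
    g₁ 0 = 1 ∧ g₂ 0 = 1 ∧
    ∀ n : ℕ, 1 ≤ n →
      g₁ n = ∑ i ∈ Finset.range n, β true (g₂ i) * g₁ (n - 1 - i) ∧
      g₂ n = ∑ i ∈ Finset.range n, β false (g₁ i) * g₂ (n - 1 - i) := by
  have hw1 : ∀ k : ℕ, (y * star y) ^ k = cword y (altL true (2 * k)) := by
    intro k; rw [cword_altL]; simp
  have hw2 : ∀ k : ℕ, (star y * y) ^ k = cword y (altL false (2 * k)) := by
    intro k; rw [cword_altL]; simp
  refine ⟨by rw [hg₁, pow_zero]; exact hEid 1 (one_mem B),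
          by rw [hg₂, pow_zero]; exact hEid 1 (one_mem B), ?_⟩
  intro n hn
  obtain ⟨m, rfl⟩ : ∃ m, n = m + 1 := ⟨n - 1, by omega⟩
  constructor
  · rw [hg₁, hw1, key_rec B E y β hcirc true m]
    apply Finset.sum_congr rfl
    intro i hi
    have hmi : m + 1 - 1 - i = m - i := by omega
    rw [hmi, hg₂ i, hw2 i, hg₁ (m - i), hw1 (m - i)]
    rfl
  · rw [hg₂, hw2, key_rec B E y β hcirc false m]
    apply Finset.sum_congr rfl
    intro i hi
    have hmi : m + 1 - 1 - i = m - i := by omega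
    rw [hmi, hg₁ i, hw1 i, hg₂ (m - i), hw2 (m - i)]
    rfl
end

section
/- In the setting of a free bipolar decomposition: if u is a unitary with E'(u)=0, x is self-adjoint, u and x are *-free over B, and a has the same *-distribution as ux, then E((aa*)^k) = θ^{-1}(E((a*a)^k)) for all k≥0, whenever u normalizes B with induced automorphism θ(b)=u*bu. -/
open scoped BigOperators

/-- Two subsets `S`, `T` are free with respect to the B-valued conditional
expectation `E`: alternating products of `E`-centered elements from `S` and
`T` have zero expectation (`true` marks `S`, `false` marks `T`). -/
def FreePairB {A B : Type*} [Ring A] [Ring B] [Algebra ℂ A] [Algebra ℂ B]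
    (E : A →ₗ[ℂ] B) (S T : Set A) : Prop :=
  ∀ l : List (A × Bool), l ≠ [] →
    (∀ p ∈ l, E p.1 = 0 ∧ (p.2 = true → p.1 ∈ S) ∧ (p.2 = false → p.1 ∈ T)) →
    l.Chain' (fun p q => p.2 ≠ q.2) →
    E (l.map Prod.fst).prod = 0

/-!
Both sides are moments of `ux`: `(a a*)ᵏ` is distributed as `(ux (ux)*)ᵏ = u x²ᵏ u*` and
`(a* a)ᵏ` as `x²ᵏ`. Writing `x²ᵏ = y + E'(x²ᵏ)` with `y` centered, freeness kills
`E'(u y u*)`, and `u E'(x²ᵏ) u* = θ⁻¹(E'(x²ᵏ))` because `u` normalizes `B`.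
-/

theorem List.prod_map_flatten_replicate_pair {α M : Type*} [Monoid M] (f : α → M) (p q : α)
    (k : ℕ) : ((List.replicate k [p, q]).flatten.map f).prod = (f p * f q) ^ k := by
  simp [List.map_flatten, List.prod_flatten]

section Unitary

variable {R : Type*} [Monoid R] [StarMul R] {u x : R}

theorem mul_star_self_pow_of_unitary_mul (hu : u ∈ unitary R) (hx : IsSelfAdjoint x) (k : ℕ) :
    (u * x * star (u * x)) ^ k = u * x ^ (2 * k) * star u := by
  have hconj : u * x * star (u * x) = u * x ^ 2 * star u := by
    rw [star_mul, hx.star_eq, sq]; simp only [mul_assoc]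
  rw [hconj, pow_mul]
  exact (Unitary.toUnits ⟨u, hu⟩).conj_pow (x ^ 2) k

theorem star_mul_self_pow_of_unitary_mul (hu : u ∈ unitary R) (hx : IsSelfAdjoint x) (k : ℕ) :
    (star (u * x) * (u * x)) ^ k = x ^ (2 * k) := by
  have hsq : star (u * x) * (u * x) = x ^ 2 := by
    rw [star_mul, hx.star_eq, sq, mul_assoc, ← mul_assoc (star u), Unitary.star_mul_self_of_mem hu,
      one_mul]
  rw [hsq, pow_mul]

end Unitary

namespace FreePairB

variable {A B : Type*} [Ring A] [Ring B] [Algebra ℂ A] [Algebra ℂ B] {E : A →ₗ[ℂ] B}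

theorem map_mul_mul_eq_zero {S T : Set A} (hfree : FreePairB E S T) {s t s' : A}
    (hs : s ∈ S) (ht : t ∈ T) (hs' : s' ∈ S) (hEs : E s = 0) (hEt : E t = 0) (hEs' : E s' = 0) :
    E (s * t * s') = 0 := by
  have := hfree [(s, true), (t, false), (s', true)] (by simp)
    (by
      intro p hp
      simp only [List.mem_cons, List.not_mem_nil, or_false] at hp
      rcases hp with rfl | rfl | rfl <;> simp [*])
    (by show List.IsChain _ _; simp)
  simpa [mul_assoc] using this

end FreePairB

section Normalizer

variable {A B : Type*} [Ring A] [StarRing A] [Algebra ℂ A] [Ring B] [StarRing B] [Algebra ℂ B]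
  {ι : B →⋆ₐ[ℂ] A} {θ : B ≃⋆ₐ[ℂ] B} {u : A}

theorem mul_map_mul_star_eq_map_symm (hu : u * star u = 1)
    (hθ : ∀ b : B, star u * ι b * u = ι (θ b)) (b : B) : u * ι b * star u = ι (θ.symm b) := by
  calc u * ι b * star u = u * (star u * ι (θ.symm b) * u) * star u := by
        rw [hθ, StarAlgEquiv.apply_symm_apply]
    _ = (u * star u) * ι (θ.symm b) * (u * star u) := by simp only [mul_assoc]
    _ = ι (θ.symm b) := by rw [hu, one_mul, mul_one]

variable [StarModule ℂ A] {E : A →ₗ[ℂ] B}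

theorem FreePairB.map_mul_mul_star_eq_symm {S T : StarSubalgebra ℂ A}
    (hfree : FreePairB E S T) (hEι : ∀ b : B, E (ι b) = b) (hιT : ∀ b : B, ι b ∈ T)
    (huS : u ∈ S) (hu : u * star u = 1) (hEu : E u = 0) (hEsu : E (star u) = 0)
    (hθ : ∀ b : B, star u * ι b * u = ι (θ b)) {y : A} (hy : y ∈ T) :
    E (u * y * star u) = θ.symm (E y) := by
  have hcentered : E (u * (y - ι (E y)) * star u) = 0 :=
    hfree.map_mul_mul_eq_zero huS (sub_mem hy (hιT _)) (star_mem huS) hEu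
      (by rw [map_sub, hEι, sub_self]) hEsu
  calc E (u * y * star u) = E (u * (y - ι (E y)) * star u) + E (u * ι (E y) * star u) := by
        rw [← map_add, ← add_mul, ← mul_add, sub_add_cancel]
    _ = θ.symm (E y) := by rw [hcentered, zero_add, mul_map_mul_star_eq_map_symm hu hθ, hEι]

end Normalizer

theorem bipolar_theta_inverse_moments_general
    {B : Type*} [Ring B] [StarRing B] [Algebra ℂ B]
    {A A' : Type*}
    [Ring A] [StarRing A] [Algebra ℂ A]
    [Ring A'] [StarRing A'] [Algebra ℂ A'] [StarModule ℂ A']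
    -- the space (A', E') containing u and x
    (ι' : B →⋆ₐ[ℂ] A') (E' : A' →ₗ[ℂ] B)
    (hE'ι : ∀ b : B, E' (ι' b) = b)
    (hE'star : ∀ z : A', E' (star z) = star (E' z))
    (u x : A')
    (huu : u * star u = 1) (hsuu : star u * u = 1)
    (hE'u : E' u = 0) (hxsa : star x = x)
    (hfree : FreePairB E'
      (StarAlgebra.adjoin ℂ (insert u (Set.range ι')) : StarSubalgebra ℂ A')
      (StarAlgebra.adjoin ℂ (insert x (Set.range ι')) : StarSubalgebra ℂ A'))
    -- u normalizes B with induced automorphism θ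
    (θ : B ≃⋆ₐ[ℂ] B)
    (hθ : ∀ b : B, star u * ι' b * u = ι' (θ b))
    -- the space (A, E) containing a, with a distributed as ux
    (ι : B →⋆ₐ[ℂ] A) (E : A →ₗ[ℂ] B)
    (a : A)
    (hdist : ∀ l : List (Bool × B),
      E ((l.map fun p => (if p.1 then a else star a) * ι p.2).prod)
        = E' ((l.map fun p => (if p.1 then u * x else star (u * x)) * ι' p.2).prod)) :
    ∀ k : ℕ, E ((a * star a) ^ k) = θ.symm (E ((star a * a) ^ k)) := by
  intro k
  have hu : u ∈ unitary A' := Unitary.mem_iff.2 ⟨hsuu, huu⟩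
  have hmoment_left : E ((a * star a) ^ k) = E' ((u * x * star (u * x)) ^ k) := by
    simpa [List.prod_map_flatten_replicate_pair] using
      hdist (List.replicate k [(true, 1), (false, 1)]).flatten
  have hmoment_right : E ((star a * a) ^ k) = E' ((star (u * x) * (u * x)) ^ k) := by
    simpa [List.prod_map_flatten_replicate_pair] using
      hdist (List.replicate k [(false, 1), (true, 1)]).flatten
  rw [hmoment_left, hmoment_right, mul_star_self_pow_of_unitary_mul hu hxsa,
    star_mul_self_pow_of_unitary_mul hu hxsa]
  exact hfree.map_mul_mul_star_eq_symm hE'ι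
    (fun b => StarAlgebra.subset_adjoin ℂ _ (Set.mem_insert_of_mem _ ⟨b, rfl⟩))
    (StarAlgebra.subset_adjoin ℂ _ (Set.mem_insert _ _)) huu hE'u
    (by rw [hE'star, hE'u, star_zero]) hθ
    (pow_mem (StarAlgebra.subset_adjoin ℂ _ (Set.mem_insert _ _)) _)

/-- If `u` is a unitary with `E'(u) = 0` normalizing `B` with automorphism
`θ(b) = u* b u`, `x` is self-adjoint, `u` and `x` are *-free over `B`, and `a`
has the same B-valued *-distribution as `ux`, then
`E((aa*)ᵏ) = θ⁻¹(E((a*a)ᵏ))` for all `k ≥ 0`. -/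
theorem bipolar_theta_inverse_moments
    {B : Type*} [Ring B] [StarRing B] [Algebra ℂ B] [StarModule ℂ B]
    {A A' : Type*}
    [Ring A] [StarRing A] [Algebra ℂ A] [StarModule ℂ A]
    [Ring A'] [StarRing A'] [Algebra ℂ A'] [StarModule ℂ A']
    -- the space (A', E') containing u and x
    (ι' : B →⋆ₐ[ℂ] A') (E' : A' →ₗ[ℂ] B)
    (hι' : Function.Injective ι')
    (hE'ι : ∀ b : B, E' (ι' b) = b)
    (hE'star : ∀ z : A', E' (star z) = star (E' z))
    (hE'bimod : ∀ z : A', ∀ b₁ b₂ : B, E' (ι' b₁ * z * ι' b₂) = b₁ * E' z * b₂)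
    (u x : A')
    (huu : u * star u = 1) (hsuu : star u * u = 1)
    (hE'u : E' u = 0) (hxsa : star x = x)
    (hfree : FreePairB E'
      (StarAlgebra.adjoin ℂ (insert u (Set.range ι')) : StarSubalgebra ℂ A')
      (StarAlgebra.adjoin ℂ (insert x (Set.range ι')) : StarSubalgebra ℂ A'))
    -- u normalizes B with induced automorphism θ
    (θ : B ≃⋆ₐ[ℂ] B)
    (hθ : ∀ b : B, star u * ι' b * u = ι' (θ b))
    -- the space (A, E) containing a, with a distributed as ux
    (ι : B →⋆ₐ[ℂ] A) (E : A →ₗ[ℂ] B)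
    (hι : Function.Injective ι)
    (hEι : ∀ b : B, E (ι b) = b)
    (hEstar : ∀ z : A, E (star z) = star (E z))
    (hEbimod : ∀ z : A, ∀ b₁ b₂ : B, E (ι b₁ * z * ι b₂) = b₁ * E z * b₂)
    (a : A)
    (hdist : ∀ l : List (Bool × B),
      E ((l.map fun p => (if p.1 then a else star a) * ι p.2).prod)
        = E' ((l.map fun p => (if p.1 then u * x else star (u * x)) * ι' p.2).prod)) :
    ∀ k : ℕ, E ((a * star a) ^ k) = θ.symm (E ((star a * a) ^ k)) :=
  bipolar_theta_inverse_moments_general ι' E' hE'ι hE'star u x huu hsuu hE'u hxsa hfree θ hθ ι E a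
    hdist
end

section
/- Let y = ux with u a unitary, E(u)=0, x self-adjoint, u and x *-free over B, and suppose y is B-valued circular with cumulants α_{(1,2)}, α_{(2,1)}. Define N_1(b)=E(ubu*) and N_2(b)=E(u*bu). Then α_{(1,2)}∘N_2 = N_1∘α_{(2,1)} as linear maps on B. -/
open scoped BigOperators

/-!
If `S ⊇ B` and `T ⊇ B` are free, then `E(p a r) = E(p E(a) r)` for `p, r ∈ S` and `a ∈ T`:
once `p`, `a`, `r` are centered over `B`, each term of the expansion of `p (a - E a) r` is
either an alternating centered word or has a centered factor next to an element of `B`,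
which the bimodule property pulls out. With `c = E(u* b u)` this gives, using `x = x*`,
`α_{(1,2)}(c) = E(u (x c x) u*) = E(u E(x c x) u*) = E(u E(x u* b u x) u*) = E(u α_{(2,1)}(b) u*)`,
the second equality by freeness of `(u, x)` and the third by freeness of `(x, u)`.
-/

section CondExp

variable {A : Type*} [Ring A] [StarRing A] [Algebra ℂ A] [StarModule ℂ A]

structure IsCondExpOnto (B : StarSubalgebra ℂ A) (E : A →ₗ[ℂ] A) : Prop where
  mem : ∀ a, E a ∈ B
  map_of_mem : ∀ b ∈ B, E b = b
  map_mul_mul : ∀ a, ∀ b₁ ∈ B, ∀ b₂ ∈ B, E (b₁ * a * b₂) = b₁ * E a * b₂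

namespace IsCondExpOnto

variable {B : StarSubalgebra ℂ A} {E : A →ₗ[ℂ] A}

theorem map_one (hE : IsCondExpOnto B E) : E 1 = 1 :=
  hE.map_of_mem 1 (one_mem B)

theorem map_map (hE : IsCondExpOnto B E) (a : A) : E (E a) = E a :=
  hE.map_of_mem _ (hE.mem a)

theorem map_sub_map (hE : IsCondExpOnto B E) (a : A) : E (a - E a) = 0 := by
  rw [map_sub, hE.map_map, sub_self]

theorem map_mul_left (hE : IsCondExpOnto B E) {b : A} (hb : b ∈ B) (a : A) :
    E (b * a) = b * E a := by
  simpa using hE.map_mul_mul a b hb 1 (one_mem B)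

theorem map_mul_right (hE : IsCondExpOnto B E) (a : A) {b : A} (hb : b ∈ B) :
    E (a * b) = E a * b := by
  simpa using hE.map_mul_mul a 1 (one_mem B) b hb

end IsCondExpOnto

end CondExp

namespace FreePair

variable {A : Type*} [Ring A] [StarRing A] [Algebra ℂ A] {E : A →ₗ[ℂ] A}

theorem symm {S T : Set A} (hfree : FreePair E S T) : FreePair E T S := by
  intro l hl hmem halt
  have h := hfree (l.map fun p => (p.1, !p.2)) (by simpa using hl) ?_ ?_
  · simpa [Function.comp_def] using h
  · simp only [List.mem_map]
    rintro _ ⟨p, hp, rfl⟩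
    obtain ⟨hEp, hT, hS⟩ := hmem p hp
    exact ⟨hEp, fun h => hS (by simpa using h), fun h => hT (by simpa using h)⟩
  · exact List.isChain_map_of_isChain _ (fun p q h => by simpa using h) halt

theorem map_mul_eq_zero {S T : Set A} (hfree : FreePair E S T) {p q : A}
    (hp : p ∈ S) (hq : q ∈ T) (hEp : E p = 0) (hEq : E q = 0) : E (p * q) = 0 := by
  have h := hfree [(p, true), (q, false)] (by simp) ?_ (show List.IsChain _ _ by simp)
  · simpa using h
  · simp only [List.mem_cons, List.not_mem_nil, or_false]
    rintro _ (rfl | rfl)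
    · exact ⟨hEp, fun _ => hp, by simp⟩
    · exact ⟨hEq, by simp, fun _ => hq⟩

theorem map_mul_mul_eq_zero {S T : Set A} (hfree : FreePair E S T) {p q r : A}
    (hp : p ∈ S) (hq : q ∈ T) (hr : r ∈ S) (hEp : E p = 0) (hEq : E q = 0) (hEr : E r = 0) :
    E (p * q * r) = 0 := by
  have h := hfree [(p, true), (q, false), (r, true)] (by simp) ?_ (show List.IsChain _ _ by simp)
  · simpa [mul_assoc] using h
  · simp only [List.mem_cons, List.not_mem_nil, or_false]
    rintro _ (rfl | rfl | rfl)
    · exact ⟨hEp, fun _ => hp, by simp⟩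
    · exact ⟨hEq, by simp, fun _ => hq⟩
    · exact ⟨hEr, fun _ => hr, by simp⟩

variable [StarModule ℂ A] {B : StarSubalgebra ℂ A} {S T : Subalgebra ℂ A}

theorem map_mul_mul_eq_zero_of_map_eq_zero (hfree : FreePair E S T) (hE : IsCondExpOnto B E)
    (hBS : (B : Set A) ⊆ (S : Set A)) {p a r : A} (hp : p ∈ S) (ha : a ∈ T) (hr : r ∈ S)
    (hEa : E a = 0) : E (p * a * r) = 0 := by
  have hp₀ : p - E p ∈ S := sub_mem hp (hBS (hE.mem p))
  have hr₀ : r - E r ∈ S := sub_mem hr (hBS (hE.mem r))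
  have hpa : E ((p - E p) * a) = 0 := hfree.map_mul_eq_zero hp₀ ha (hE.map_sub_map p) hEa
  have har : E (a * (r - E r)) = 0 := hfree.symm.map_mul_eq_zero ha hr₀ hEa (hE.map_sub_map r)
  have hpar : E ((p - E p) * a * (r - E r)) = 0 :=
    hfree.map_mul_mul_eq_zero hp₀ ha hr₀ (hE.map_sub_map p) hEa (hE.map_sub_map r)
  have hexpand : p * a * r = (p - E p) * a * (r - E r) + (p - E p) * a * E r
      + E p * (a * (r - E r)) + E p * a * E r := by noncomm_ring
  rw [hexpand, map_add, map_add, map_add, hpar, hE.map_mul_right _ (hE.mem r), hpa,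
    hE.map_mul_left (hE.mem p), har, hE.map_mul_mul _ _ (hE.mem p) _ (hE.mem r), hEa]
  simp

theorem map_mul_mul_map (hfree : FreePair E S T) (hE : IsCondExpOnto B E)
    (hBS : (B : Set A) ⊆ (S : Set A)) (hBT : (B : Set A) ⊆ (T : Set A)) {p a r : A}
    (hp : p ∈ S) (ha : a ∈ T) (hr : r ∈ S) : E (p * a * r) = E (p * E a * r) := by
  have hcentered : E (p * (a - E a) * r) = 0 :=
    hfree.map_mul_mul_eq_zero_of_map_eq_zero hE hBS hp (sub_mem ha (hBT (hE.mem a))) hr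
      (hE.map_sub_map a)
  rwa [mul_sub, sub_mul, map_sub, sub_eq_zero] at hcentered

end FreePair

namespace IsCircularWith

variable {A : Type*} [Ring A] [StarRing A] [Algebra ℂ A] [StarModule ℂ A]
  {B : StarSubalgebra ℂ A} {E : A →ₗ[ℂ] A} {y : A} {β : Bool → A →ₗ[ℂ] A}

theorem map_mul_mul_star (hcirc : IsCircularWith B E y β) (hE1 : E 1 = 1) {b : A}
    (hb : b ∈ B) : E (y * b * star y) = β true b := by
  simpa [cword, hE1, mul_assoc] using hcirc true b hb [(false, 1)] (by simp)

theorem map_star_mul_mul (hcirc : IsCircularWith B E y β) (hE1 : E 1 = 1) {b : A}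
    (hb : b ∈ B) : E (star y * b * y) = β false b := by
  simpa [cword, hE1, mul_assoc] using hcirc false b hb [(true, 1)] (by simp)

end IsCircularWith

theorem circular_N1_N2_intertwine_general
    {A : Type*} [Ring A] [StarRing A] [Algebra ℂ A] [StarModule ℂ A]
    (B : StarSubalgebra ℂ A) (E : A →ₗ[ℂ] A)
    (hErange : ∀ a : A, E a ∈ B)
    (hEid : ∀ b ∈ B, E b = b)
    (hEbimod : ∀ a : A, ∀ b₁ ∈ B, ∀ b₂ ∈ B, E (b₁ * a * b₂) = b₁ * E a * b₂)
    (u x y : A)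
    (hxsa : star x = x)
    (hfree : FreePair E
      (StarAlgebra.adjoin ℂ (insert u (B : Set A)) : StarSubalgebra ℂ A)
      (StarAlgebra.adjoin ℂ (insert x (B : Set A)) : StarSubalgebra ℂ A))
    (hy : y = u * x)
    (β : Bool → A →ₗ[ℂ] A)
    (hcirc : IsCircularWith B E y β) :
    ∀ b ∈ B, β true (E (star u * b * u)) = E (u * β false b * star u) := by
  intro b hb
  have hE : IsCondExpOnto B E := ⟨hErange, hEid, hEbimod⟩
  set S := StarAlgebra.adjoin ℂ (insert u (B : Set A))
  set T := StarAlgebra.adjoin ℂ (insert x (B : Set A))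
  have hBS : (B : Set A) ⊆ S := (Set.subset_insert _ _).trans (StarAlgebra.subset_adjoin ℂ _)
  have hBT : (B : Set A) ⊆ T := (Set.subset_insert _ _).trans (StarAlgebra.subset_adjoin ℂ _)
  have huS : u ∈ S := StarAlgebra.subset_adjoin ℂ _ (Set.mem_insert _ _)
  have hxT : x ∈ T := StarAlgebra.subset_adjoin ℂ _ (Set.mem_insert _ _)
  have hsuS : star u ∈ S := star_mem huS
  have hu₂S : star u * b * u ∈ S := mul_mem (mul_mem hsuS (hBS hb)) huS
  have hysy : star y = x * star u := by rw [hy, star_mul, hxsa]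
  set c := E (star u * b * u)
  have hx₂T : x * c * x ∈ T := mul_mem (mul_mem hxT (hBT (hErange _))) hxT
  calc β true c = E (y * c * star y) := (hcirc.map_mul_mul_star hE.map_one (hErange _)).symm
    _ = E (u * (x * c * x) * star u) := by rw [hysy, hy]; simp only [mul_assoc]
    _ = E (u * E (x * c * x) * star u) :=
        hfree.map_mul_mul_map hE hBS hBT huS hx₂T hsuS
    _ = E (u * E (x * (star u * b * u) * x) * star u) := by
        rw [hfree.symm.map_mul_mul_map hE hBT hBS hxT hu₂S hxT]
    _ = E (u * E (star y * b * y) * star u) := by rw [hysy, hy]; simp only [mul_assoc]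
    _ = E (u * β false b * star u) := by rw [hcirc.map_star_mul_mul hE.map_one hb]

/-- If the circular element `y = ux` has a free decomposition with `u` unitary,
`E(u) = 0`, `x` self-adjoint and `u, x` *-free over `B`, then, with
`N₁(b) = E(ubu*)` and `N₂(b) = E(u*bu)`, one has
`α_{(1,2)} ∘ N₂ = N₁ ∘ α_{(2,1)}` on `B`. -/
theorem circular_N1_N2_intertwine
    {A : Type*} [Ring A] [StarRing A] [Algebra ℂ A] [StarModule ℂ A]
    (B : StarSubalgebra ℂ A) (E : A →ₗ[ℂ] A)
    (hErange : ∀ a : A, E a ∈ B)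
    (hEid : ∀ b ∈ B, E b = b)
    (hEstar : ∀ a : A, E (star a) = star (E a))
    (hEbimod : ∀ a : A, ∀ b₁ ∈ B, ∀ b₂ ∈ B, E (b₁ * a * b₂) = b₁ * E a * b₂)
    (u x y : A)
    (huu : u * star u = 1) (hsuu : star u * u = 1)
    (hEu : E u = 0) (hxsa : star x = x)
    (hfree : FreePair E
      (StarAlgebra.adjoin ℂ (insert u (B : Set A)) : StarSubalgebra ℂ A)
      (StarAlgebra.adjoin ℂ (insert x (B : Set A)) : StarSubalgebra ℂ A))
    (hy : y = u * x)
    (β : Bool → A →ₗ[ℂ] A)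
    (hcirc : IsCircularWith B E y β) :
    ∀ b ∈ B, β true (E (star u * b * u)) = E (u * β false b * star u) :=
  circular_N1_N2_intertwine_general B E hErange hEid hEbimod u x y hxsa hfree hy β hcirc
end
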